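/- arXiv:2507.06115 — 5 statements merged into one kernel-verified Lean document; each statement's English description precedes it below -/
import Mathlib

section
/- Let d ≥ 1 and let A, B ⊆ {0,1}^d (viewed as subsets of ℤ^d). Then the sumset A + B = {a + b : a ∈ A, b ∈ B} satisfies |A + B| ≥ |A|^{(log₂ 3)/2} · |B|^{(log₂ 3)/2}. -/
/-!
Write `κ = log₂ 3 / 2`. Splitting `A` and `B` by their first coordinate into `A₀, A₁` and
`B₀, B₁`, the sumsets `A₀ + B₀`, `A₁ + B₁` and `A₀ + B₁`, `A₁ + B₀` lie in the slices of `A + B`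
with first coordinate `0`, `2` and `1` respectively, so induction on `d` reduces the theorem to
the four-point inequality
`(a₀ + a₁)^κ (b₀ + b₁)^κ ≤ a₀^κ b₀^κ + a₁^κ b₁^κ + max (a₀^κ b₁^κ) (a₁^κ b₀^κ)`.
After scaling this is `(1 + x)^κ (1 + y)^κ ≤ 1 + x^κ + y^κ` for `x y ≤ 1`. For fixed `x`, the
derivative in `y` of the difference of the two sides changes sign at most once, from `+` to `-`,
so it suffices to check the endpoints `y = 0` (subadditivity of `t ↦ t^κ`) and `y = 1 / x`.
The latter is `(1 + x)^(2κ) ≤ 1 + x^κ + x^(2κ)`, an equality at `x = 0` and at `x = 1`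
(as `4^κ = 3`); on `[0, 1]` the derivative of the difference again changes sign only once, which
is seen through the substitution `w = 1 / x`.
-/

open scoped Pointwise

section Calculus

open Real Set

theorem min_le_of_hasDerivAt_of_deriv_sign {f f' : ℝ → ℝ} {a b x : ℝ}
    (hf : ContinuousOn f (Icc a b)) (hf' : ∀ t ∈ Ioo a b, HasDerivAt f (f' t) t)
    (hsign : ∀ u ∈ Ioo a b, ∀ v ∈ Ioo a b, u < v → f' u < 0 → f' v ≤ 0)
    (hx : x ∈ Icc a b) : min (f a) (f b) ≤ f x := by
  by_contra! hlt
  have hax : a < x := hx.1.lt_of_ne (by rintro rfl; exact (min_le_left _ _).not_gt hlt)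
  have hxb : x < b := hx.2.lt_of_ne (by rintro rfl; exact (min_le_right _ _).not_gt hlt)
  obtain ⟨u, hu, hfu⟩ := exists_hasDerivAt_eq_slope f f' hax
    (hf.mono (Icc_subset_Icc_right hxb.le)) fun t ht => hf' t ⟨ht.1, ht.2.trans hxb⟩
  obtain ⟨v, hv, hfv⟩ := exists_hasDerivAt_eq_slope f f' hxb
    (hf.mono (Icc_subset_Icc_left hax.le)) fun t ht => hf' t ⟨hax.trans ht.1, ht.2⟩
  have hu_neg : f' u < 0 := by
    rw [hfu]
    exact div_neg_of_neg_of_pos (by linarith [min_le_left (f a) (f b)]) (sub_pos.2 hax)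
  have hv_pos : 0 < f' v := by
    rw [hfv]
    exact div_pos (by linarith [min_le_right (f a) (f b)]) (sub_pos.2 hxb)
  exact (hsign u ⟨hu.1, hu.2.trans hxb⟩ v ⟨hax.trans hv.1, hv.2⟩ (hu.2.trans hv.1) hu_neg).not_gt
    hv_pos

theorem hasDerivAt_one_add_rpow {p t : ℝ} (ht : 0 < t) :
    HasDerivAt (fun s => (1 + s) ^ p) (p * (1 + t) ^ (p - 1)) t := by
  simpa using ((hasDerivAt_id t).const_add 1).rpow_const (p := p) (Or.inl (by positivity))

theorem min_le_rpow_sub_mul_one_add_rpow {p K a b t : ℝ} (hp : 0 < p) (hp1 : p ≤ 1)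
    (ha : 0 ≤ a) (ht : t ∈ Icc a b) :
    min (a ^ p - K * (1 + a) ^ p) (b ^ p - K * (1 + b) ^ p) ≤ t ^ p - K * (1 + t) ^ p := by
  have hcont : Continuous fun s : ℝ => s ^ p := continuous_rpow_const hp.le
  refine min_le_of_hasDerivAt_of_deriv_sign (f := fun s => s ^ p - K * (1 + s) ^ p)
    (f' := fun s => p * s ^ (p - 1) - K * (p * (1 + s) ^ (p - 1)))
    (Continuous.continuousOn
      (hcont.sub (continuous_const.mul (hcont.comp (continuous_const.add continuous_id)))))
    (fun s hs => (hasDerivAt_rpow_const (Or.inl (ha.trans_lt hs.1).ne')).sub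
      ((hasDerivAt_one_add_rpow (ha.trans_lt hs.1)).const_mul K)) ?_ ht
  intro u hu v hv huv hneg
  have hu0 : 0 < u := ha.trans_lt hu.1
  have hv0 : 0 < v := hu0.trans huv
  -- the derivative at `s` has the sign of `(s / (1 + s)) ^ (p - 1) - K`,
  -- and `s / (1 + s)` increases
  have factor : ∀ s, 0 < s → p * s ^ (p - 1) - K * (p * (1 + s) ^ (p - 1)) =
      p * (1 + s) ^ (p - 1) * ((s / (1 + s)) ^ (p - 1) - K) := by
    intro s hs
    rw [div_rpow hs.le (by positivity)]
    field_simp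
  simp only [factor u hu0, factor v hv0] at hneg ⊢
  have hmono : (v / (1 + v)) ^ (p - 1) ≤ (u / (1 + u)) ^ (p - 1) :=
    rpow_le_rpow_of_nonpos (by positivity)
      (by rw [div_le_div_iff₀ (by positivity) (by positivity)]; linarith) (by linarith)
  have := neg_of_mul_neg_right hneg (by positivity)
  exact mul_nonpos_of_nonneg_of_nonpos (by positivity) (by linarith)

theorem min_le_one_add_rpow_sub_rpow {p a b t : ℝ} (hp : 1 / 2 ≤ p) (hp1 : p ≤ 1)
    (ha : 1 ≤ a) (ht : t ∈ Icc a b) :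
    min ((1 + a) ^ (2 * p - 1) - a ^ p / 2) ((1 + b) ^ (2 * p - 1) - b ^ p / 2) ≤
      (1 + t) ^ (2 * p - 1) - t ^ p / 2 := by
  have hcont : Continuous fun s : ℝ => s ^ p := continuous_rpow_const (by linarith)
  have hcont' : Continuous fun s : ℝ => s ^ (2 * p - 1) := continuous_rpow_const (by linarith)
  refine min_le_of_hasDerivAt_of_deriv_sign (f := fun s => (1 + s) ^ (2 * p - 1) - s ^ p / 2)
    (f' := fun s => (2 * p - 1) * (1 + s) ^ (2 * p - 1 - 1) - p * s ^ (p - 1) / 2)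
    ((hcont'.comp (continuous_const.add continuous_id)).sub (hcont.div_const 2)).continuousOn
    (fun s hs => (hasDerivAt_one_add_rpow (by linarith [hs.1])).sub
      ((hasDerivAt_rpow_const (Or.inl (by linarith [hs.1]))).div_const 2)) ?_ ht
  intro u hu v hv huv hneg
  have hu1 : 1 < u := ha.trans_lt hu.1
  have hv1 : 1 < v := hu1.trans huv
  -- the derivative at `s` has the sign of `(2p - 1) ((1 + s)² / s) ^ (p - 1) - p / 2`,
  -- and `(1 + s)² / s` increases for `s ≥ 1`
  have factor : ∀ s, 0 < s → (2 * p - 1) * (1 + s) ^ (2 * p - 1 - 1) - p * s ^ (p - 1) / 2 =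
      s ^ (p - 1) * ((2 * p - 1) * ((1 + s) ^ 2 / s) ^ (p - 1) - p / 2) := by
    intro s hs
    rw [div_rpow (by positivity) hs.le,
      show 2 * p - 1 - 1 = ((2 : ℕ) : ℝ) * (p - 1) by push_cast; ring,
      rpow_natCast_mul (by positivity)]
    have : 0 < s ^ (p - 1) := by positivity
    field_simp
  simp only [factor u (by linarith), factor v (by linarith)] at hneg ⊢
  have hincr : (1 + u) ^ 2 / u ≤ (1 + v) ^ 2 / v := by
    rw [div_le_div_iff₀ (by positivity) (by positivity)]
    have huv1 : 1 ≤ u * v := one_le_mul_of_one_le_of_one_le hu1.le hv1.le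
    nlinarith [mul_nonneg (sub_nonneg.2 huv.le) (sub_nonneg.2 huv1)]
  have hmono : ((1 + v) ^ 2 / v) ^ (p - 1) ≤ ((1 + u) ^ 2 / u) ^ (p - 1) :=
    rpow_le_rpow_of_nonpos (by positivity) hincr (by linarith)
  have := neg_of_mul_neg_right hneg (by positivity)
  exact mul_nonpos_of_nonneg_of_nonpos (by positivity) (by nlinarith)

noncomputable def cubeExponent : ℝ := logb 2 3 / 2

local notation "κ" => cubeExponent

theorem two_rpow_two_mul_cubeExponent : (2 : ℝ) ^ (2 * κ) = 3 := by
  rw [cubeExponent, mul_div_cancel₀ _ two_ne_zero,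
    rpow_logb (by norm_num) (by norm_num) (by norm_num)]

theorem half_lt_cubeExponent : 1 / 2 < κ := by
  have : 1 < logb 2 3 := by
    rw [lt_logb_iff_rpow_lt (by norm_num) (by norm_num), rpow_one]; norm_num
  rw [cubeExponent]; linarith

theorem cubeExponent_lt_one : κ < 1 := by
  have : logb 2 3 < 2 := by
    rw [logb_lt_iff_lt_rpow (by norm_num) (by norm_num), show (2 : ℝ) = (2 : ℕ) by norm_num,
      rpow_natCast]; norm_num
  rw [cubeExponent]; linarith

theorem cubeExponent_pos : 0 < κ := by linarith [half_lt_cubeExponent]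

theorem one_add_rpow_le_one_add_rpow {x : ℝ} (hx : 0 ≤ x) : (1 + x) ^ κ ≤ 1 + x ^ κ := by
  simpa using rpow_add_le_add_rpow zero_le_one hx cubeExponent_pos.le cubeExponent_lt_one.le

theorem one_add_rpow_two_mul_cubeExponent_le {x : ℝ} (hx : x ∈ Icc (0 : ℝ) 1) :
    (1 + x) ^ (2 * κ) ≤ 1 + x ^ κ + x ^ (2 * κ) := by
  have hκ := cubeExponent_pos
  have hκ2 : 0 < 2 * κ := by positivity
  let ψ := fun w : ℝ => (1 + w) ^ (2 * κ - 1) - w ^ κ / 2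
  have hψ1 : ψ 1 = 1 := by
    simp only [ψ, one_rpow, one_add_one_eq_two, rpow_sub two_pos, two_rpow_two_mul_cubeExponent,
      rpow_one]
    norm_num
  have hderiv : ∀ s, 0 < s → κ * s ^ (κ - 1) + 2 * κ * s ^ (2 * κ - 1) -
      2 * κ * (1 + s) ^ (2 * κ - 1) = 2 * κ * s ^ (2 * κ - 1) * (1 - ψ s⁻¹) := by
    intro s hs
    have e1 : s ^ (2 * κ - 1) * s⁻¹ ^ κ = s ^ (κ - 1) := by
      rw [inv_rpow hs.le, ← rpow_neg hs.le, ← rpow_add hs]; ring_nf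
    have e2 : s ^ (2 * κ - 1) * (1 + s⁻¹) ^ (2 * κ - 1) = (1 + s) ^ (2 * κ - 1) := by
      rw [← mul_rpow hs.le (by positivity), mul_add, mul_inv_cancel₀ hs.ne', mul_one, add_comm]
    simp only [ψ]
    linear_combination (-κ) * e1 + 2 * κ * e2
  have key := min_le_of_hasDerivAt_of_deriv_sign
    (f := fun s => 1 + s ^ κ + s ^ (2 * κ) - (1 + s) ^ (2 * κ))
    (f' := fun s => κ * s ^ (κ - 1) + 2 * κ * s ^ (2 * κ - 1) - 2 * κ * (1 + s) ^ (2 * κ - 1))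
    (((continuous_const.add (continuous_rpow_const hκ.le)).add (continuous_rpow_const hκ2.le)).sub
      ((continuous_rpow_const hκ2.le).comp (continuous_const.add continuous_id))).continuousOn
    (fun s hs => (((hasDerivAt_rpow_const (Or.inl hs.1.ne')).const_add 1).add
      (hasDerivAt_rpow_const (Or.inl hs.1.ne'))).sub (hasDerivAt_one_add_rpow hs.1)) ?_ hx
  · simp only [zero_rpow hκ.ne', zero_rpow hκ2.ne', one_rpow, add_zero, one_add_one_eq_two,
      two_rpow_two_mul_cubeExponent] at key
    norm_num at key
    linarith
  -- `f' u < 0` means `ψ u⁻¹ > 1 = ψ 1`, and on `[1, u⁻¹]` the function `ψ` stays above the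
  -- smaller of its endpoint values
  intro u hu v hv huv hneg
  simp only [hderiv u hu.1, hderiv v (hu.1.trans huv)] at hneg ⊢
  have hψu : 1 < ψ u⁻¹ := by
    have := neg_of_mul_neg_right hneg (by have := hu.1; positivity)
    linarith
  have hψv := min_le_one_add_rpow_sub_rpow half_lt_cubeExponent.le cubeExponent_lt_one.le le_rfl
    (t := v⁻¹) (b := u⁻¹) ⟨(one_le_inv₀ (hu.1.trans huv)).2 hv.2.le, inv_anti₀ hu.1 huv.le⟩
  change min (ψ 1) (ψ u⁻¹) ≤ ψ v⁻¹ at hψv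
  rw [hψ1, min_eq_left hψu.le] at hψv
  exact mul_nonpos_of_nonneg_of_nonpos (by have := hu.1.trans huv; positivity) (by linarith)

theorem one_add_rpow_mul_one_add_inv_rpow_le {x : ℝ} (hx : 0 < x) :
    (1 + x) ^ κ * (1 + x⁻¹) ^ κ ≤ 1 + x ^ κ + x⁻¹ ^ κ := by
  wlog hx1 : x ≤ 1 generalizing x
  · have := this (inv_pos.2 hx) (inv_le_one_of_one_le₀ (le_of_not_ge hx1))
    rw [inv_inv] at this
    linarith
  have hX : 0 < x ^ κ := rpow_pos_of_pos hx κ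
  have hstar := one_add_rpow_two_mul_cubeExponent_le ⟨hx.le, hx1⟩
  rw [mul_comm 2 κ, rpow_mul (by positivity), rpow_mul hx.le, rpow_two, rpow_two] at hstar
  rw [inv_rpow hx.le, show 1 + x⁻¹ = (1 + x) / x by field_simp; ring,
    div_rpow (by positivity) hx.le, ← sub_nonneg]
  have : 1 + x ^ κ + (x ^ κ)⁻¹ - (1 + x) ^ κ * ((1 + x) ^ κ / x ^ κ) =
      (1 + x ^ κ + (x ^ κ) ^ 2 - ((1 + x) ^ κ) ^ 2) / x ^ κ := by
    field_simp; ring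
  rw [this]
  exact div_nonneg (by linarith) hX.le

theorem one_add_rpow_mul_one_add_rpow_le {x y : ℝ} (hx : 0 ≤ x) (hy : 0 ≤ y) (hxy : x * y ≤ 1) :
    (1 + x) ^ κ * (1 + y) ^ κ ≤ 1 + x ^ κ + y ^ κ := by
  have hκ := cubeExponent_pos
  rcases hx.eq_or_lt with rfl | hx
  · simpa [zero_rpow hκ.ne'] using one_add_rpow_le_one_add_rpow hy
  -- as a function of `y`, the difference of the two sides is smallest at `y = 0` or `y = x⁻¹`
  have hmin := min_le_rpow_sub_mul_one_add_rpow (K := (1 + x) ^ κ) hκ cubeExponent_lt_one.le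
    le_rfl (b := x⁻¹) ⟨hy, by rw [← one_div, le_div_iff₀ hx]; linarith⟩
  have h0 := one_add_rpow_le_one_add_rpow hx.le
  have h1 := one_add_rpow_mul_one_add_inv_rpow_le hx
  simp only [zero_rpow hκ.ne', add_zero, one_rpow, mul_one, min_le_iff] at hmin
  rcases hmin with h | h <;> linarith

theorem add_rpow_mul_add_rpow_le_of_mul_le {a₀ a₁ b₀ b₁ : ℝ} (ha₀ : 0 ≤ a₀) (ha₁ : 0 ≤ a₁)
    (hb₀ : 0 ≤ b₀) (hb₁ : 0 ≤ b₁) (h : a₁ * b₀ ≤ a₀ * b₁) :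
    (a₀ + a₁) ^ κ * (b₀ + b₁) ^ κ ≤ a₀ ^ κ * b₀ ^ κ + a₀ ^ κ * b₁ ^ κ + a₁ ^ κ * b₁ ^ κ := by
  have hκ := cubeExponent_pos
  rcases (mul_nonneg ha₁ hb₀).eq_or_lt with h0 | hpos
  · -- subadditivity of `t ↦ t ^ κ` suffices, since `a₁ ^ κ * b₀ ^ κ = (a₁ * b₀) ^ κ = 0`
    have hcross : a₁ ^ κ * b₀ ^ κ = 0 := by rw [← mul_rpow ha₁ hb₀, ← h0, zero_rpow hκ.ne']
    calc (a₀ + a₁) ^ κ * (b₀ + b₁) ^ κ ≤ (a₀ ^ κ + a₁ ^ κ) * (b₀ ^ κ + b₁ ^ κ) :=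
          mul_le_mul (rpow_add_le_add_rpow ha₀ ha₁ hκ.le cubeExponent_lt_one.le)
            (rpow_add_le_add_rpow hb₀ hb₁ hκ.le cubeExponent_lt_one.le) (by positivity)
            (by positivity)
      _ = _ := by linear_combination hcross
  have ha₀' : 0 < a₀ := lt_of_le_of_ne ha₀ (by rintro rfl; linarith)
  have hb₁' : 0 < b₁ := lt_of_le_of_ne hb₁ (by rintro rfl; linarith)
  obtain ⟨x, hx, rfl⟩ : ∃ x, 0 ≤ x ∧ a₁ = a₀ * x := ⟨a₁ / a₀, by positivity, by field_simp⟩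
  obtain ⟨y, hy, rfl⟩ : ∃ y, 0 ≤ y ∧ b₀ = b₁ * y := ⟨b₀ / b₁, by positivity, by field_simp⟩
  have hxy : x * y ≤ 1 := by
    have : a₀ * b₁ * (x * y) ≤ a₀ * b₁ * 1 := by linarith
    exact le_of_mul_le_mul_left this (by positivity)
  rw [show a₀ + a₀ * x = a₀ * (1 + x) by ring, show b₁ * y + b₁ = b₁ * (1 + y) by ring]
  simp only [mul_rpow ha₀ hx, mul_rpow hb₁ hy, mul_rpow ha₀ (by positivity : (0 : ℝ) ≤ 1 + x),
    mul_rpow hb₁ (by positivity : (0 : ℝ) ≤ 1 + y)]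
  calc a₀ ^ κ * (1 + x) ^ κ * (b₁ ^ κ * (1 + y) ^ κ)
      = a₀ ^ κ * b₁ ^ κ * ((1 + x) ^ κ * (1 + y) ^ κ) := by ring
    _ ≤ a₀ ^ κ * b₁ ^ κ * (1 + x ^ κ + y ^ κ) :=
        mul_le_mul_of_nonneg_left (one_add_rpow_mul_one_add_rpow_le hx hy hxy) (by positivity)
    _ = _ := by ring

theorem add_rpow_mul_add_rpow_le {a₀ a₁ b₀ b₁ : ℝ} (ha₀ : 0 ≤ a₀) (ha₁ : 0 ≤ a₁) (hb₀ : 0 ≤ b₀)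
    (hb₁ : 0 ≤ b₁) :
    (a₀ + a₁) ^ κ * (b₀ + b₁) ^ κ ≤
      a₀ ^ κ * b₀ ^ κ + a₁ ^ κ * b₁ ^ κ + max (a₀ ^ κ * b₁ ^ κ) (a₁ ^ κ * b₀ ^ κ) := by
  rcases le_total (a₁ * b₀) (a₀ * b₁) with h | h
  · linarith [add_rpow_mul_add_rpow_le_of_mul_le ha₀ ha₁ hb₀ hb₁ h,
      le_max_left (a₀ ^ κ * b₁ ^ κ) (a₁ ^ κ * b₀ ^ κ)]
  · have := add_rpow_mul_add_rpow_le_of_mul_le ha₁ ha₀ hb₁ hb₀ (by linarith)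
    rw [add_comm a₁, add_comm b₁] at this
    linarith [le_max_right (a₀ ^ κ * b₁ ^ κ) (a₁ ^ κ * b₀ ^ κ)]

end Calculus

section Slices

open Finset
variable {d : ℕ}

noncomputable def headSlice (k : ℤ) (S : Finset (Fin (d + 1) → ℤ)) : Finset (Fin d → ℤ) :=
  S.preimage (Matrix.vecCons k) (Fin.cons_right_injective (α := fun _ => ℤ) k).injOn

@[simp]
theorem mem_headSlice {k : ℤ} {S : Finset (Fin (d + 1) → ℤ)} {u : Fin d → ℤ} :
    u ∈ headSlice k S ↔ Matrix.vecCons k u ∈ S :=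
  mem_preimage

theorem card_headSlice (k : ℤ) (S : Finset (Fin (d + 1) → ℤ)) :
    #(headSlice k S) = #{x ∈ S | x 0 = k} := by
  classical
  refine (card_preimage _ _ _).trans (congrArg card ?_)
  refine filter_congr fun x _ => ⟨?_, fun h => ⟨Matrix.vecTail x, ?_⟩⟩
  · rintro ⟨u, rfl⟩
    rfl
  · rw [← h]
    exact Matrix.cons_head_tail x

theorem card_eq_sum_card_headSlice {S : Finset (Fin (d + 1) → ℤ)} {t : Finset ℤ}
    (h : ∀ x ∈ S, x 0 ∈ t) : #S = ∑ k ∈ t, #(headSlice k S) := by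
  simp only [card_headSlice]
  exact card_eq_sum_card_fiberwise h

theorem sum_card_headSlice_le (S : Finset (Fin (d + 1) → ℤ)) (t : Finset ℤ) :
    ∑ k ∈ t, #(headSlice k S) ≤ #S := by
  simpa [card_headSlice] using
    sum_fiberwise_le_sum_of_sum_fiber_nonneg (s := S) (t := t) (g := fun x => x 0)
      (f := fun _ => 1) fun _ _ => Nat.zero_le _

theorem headSlice_add_headSlice_subset (j k : ℤ) (A B : Finset (Fin (d + 1) → ℤ)) :
    headSlice j A + headSlice k B ⊆ headSlice (j + k) (A + B) := by
  rintro _ hw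
  obtain ⟨u, hu, v, hv, rfl⟩ := mem_add.1 hw
  rw [mem_headSlice, ← Matrix.cons_add_cons]
  exact add_mem_add (mem_headSlice.1 hu) (mem_headSlice.1 hv)

theorem mem_headSlice_binary {k : ℤ} {S : Finset (Fin (d + 1) → ℤ)}
    (hS : ∀ x ∈ S, ∀ i, x i = 0 ∨ x i = 1) : ∀ u ∈ headSlice k S, ∀ i, u i = 0 ∨ u i = 1 :=
  fun u hu i => by simpa using hS _ (mem_headSlice.1 hu) i.succ

theorem card_eq_card_headSlice_zero_add_one {S : Finset (Fin (d + 1) → ℤ)}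
    (hS : ∀ x ∈ S, ∀ i, x i = 0 ∨ x i = 1) : #S = #(headSlice 0 S) + #(headSlice 1 S) := by
  have hhead : ∀ x ∈ S, x 0 ∈ ({0, 1} : Finset ℤ) := fun x hx => by
    rcases hS x hx 0 with h | h <;> simp [h]
  simp [card_eq_sum_card_headSlice hhead]

theorem card_rpow_mul_card_rpow_le_card_add {p : ℝ} (hp : 0 < p)
    (hfour : ∀ a₀ a₁ b₀ b₁ : ℝ, 0 ≤ a₀ → 0 ≤ a₁ → 0 ≤ b₀ → 0 ≤ b₁ →
      (a₀ + a₁) ^ p * (b₀ + b₁) ^ p ≤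
        a₀ ^ p * b₀ ^ p + a₁ ^ p * b₁ ^ p + max (a₀ ^ p * b₁ ^ p) (a₁ ^ p * b₀ ^ p))
    (A B : Finset (Fin d → ℤ)) (hA : ∀ a ∈ A, ∀ i, a i = 0 ∨ a i = 1)
    (hB : ∀ b ∈ B, ∀ i, b i = 0 ∨ b i = 1) :
    (#A : ℝ) ^ p * (#B : ℝ) ^ p ≤ #(A + B) := by
  induction d with
  | zero =>
    rcases A.eq_empty_or_nonempty with rfl | hA'
    · simp [Real.zero_rpow hp.ne']
    rcases B.eq_empty_or_nonempty with rfl | hB'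
    · simp [Real.zero_rpow hp.ne']
    have hA1 : #A = 1 := le_antisymm (card_le_one_of_subsingleton A) hA'.card_pos
    have hB1 : #B = 1 := le_antisymm (card_le_one_of_subsingleton B) hB'.card_pos
    simpa [hA1, hB1] using (hA'.add hB').card_pos
  | succ d ih =>
    have hslice (j k : ℤ) :
        (#(headSlice j A) : ℝ) ^ p * (#(headSlice k B) : ℝ) ^ p ≤ #(headSlice (j + k) (A + B)) :=
      (ih _ _ (mem_headSlice_binary hA) (mem_headSlice_binary hB)).trans
        (mod_cast card_le_card (headSlice_add_headSlice_subset j k A B))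
    have hsum : (#(headSlice 0 (A + B)) + #(headSlice 1 (A + B)) + #(headSlice 2 (A + B)) : ℝ) ≤
        #(A + B) := by
      have := sum_card_headSlice_le (A + B) {0, 1, 2}
      rw [sum_insert (by norm_num), sum_insert (by norm_num), sum_singleton, ← add_assoc] at this
      exact_mod_cast this
    rw [card_eq_card_headSlice_zero_add_one hA, card_eq_card_headSlice_zero_add_one hB]
    push_cast
    refine (hfour _ _ _ _ (by positivity) (by positivity) (by positivity) (by positivity)).trans ?_
    have h00 := hslice 0 0
    have h01 := hslice 0 1
    have h10 := hslice 1 0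
    have h11 := hslice 1 1
    norm_num at h00 h01 h10 h11
    linarith [max_le h01 h10]

end Slices

theorem brunn_minkowski_hypercube_general (d : ℕ)
    (A B : Finset (Fin d → ℤ))
    (hA : ∀ a ∈ A, ∀ i, a i = 0 ∨ a i = 1)
    (hB : ∀ b ∈ B, ∀ i, b i = 0 ∨ b i = 1) :
    (A.card : ℝ) ^ (Real.logb 2 3 / 2) * (B.card : ℝ) ^ (Real.logb 2 3 / 2) ≤
      ((A + B).card : ℝ) :=
  card_rpow_mul_card_rpow_le_card_add cubeExponent_pos (fun _ _ _ _ => add_rpow_mul_add_rpow_le)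
    A B hA hB

theorem brunn_minkowski_hypercube (d : ℕ) (hd : 1 ≤ d)
    (A B : Finset (Fin d → ℤ))
    (hA : ∀ a ∈ A, ∀ i, a i = 0 ∨ a i = 1)
    (hB : ∀ b ∈ B, ∀ i, b i = 0 ∨ b i = 1) :
    (A.card : ℝ) ^ (Real.logb 2 3 / 2) * (B.card : ℝ) ^ (Real.logb 2 3 / 2) ≤
      ((A + B).card : ℝ) :=
  brunn_minkowski_hypercube_general d A B hA hB
end

section
/- Let d ≥ 1, r > 1 and 1 ≤ p, q ≤ r. Assume that for all real x, y ≥ 0 the numerical inequality (1 + (x + y)^r + (xy)^r)^{1/r} ≤ (1 + x^p)^{1/p} (1 + y^q)^{1/q} holds. Then for all f, g : ℤ^d → ℝ supported in {0,1}^d one has ‖f*g‖_{ℓ^r(ℤ^d)} ≤ ‖f‖_{ℓ^p(ℤ^d)} ‖g‖_{ℓ^q(ℤ^d)}. -/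
open scoped BigOperators ENNReal

/-- Convolution of two functions on `ℤ^d`. -/
noncomputable def cconv {d : ℕ} (f g : (Fin d → ℤ) → ℝ) : (Fin d → ℤ) → ℝ :=
  fun m => ∑' u : Fin d → ℤ, f u * g (m - u)

/-- A point of `ℤ^d` lies in the hypercube `{0,1}^d`. -/
def InCube {d : ℕ} (x : Fin d → ℤ) : Prop := ∀ i, x i = 0 ∨ x i = 1

/-- A function on `ℤ^d` is supported in `{0,1}^d`. -/
def SupportedInCube {d : ℕ} (f : (Fin d → ℤ) → ℝ) : Prop :=
  ∀ x : Fin d → ℤ, ¬ InCube x → f x = 0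

/-- The `ℓ^s` norm of a function on `ℤ^d` (for `0 < s < ∞`). -/
noncomputable def lnorm {d : ℕ} (s : ℝ) (f : (Fin d → ℤ) → ℝ) : ℝ :=
  (∑' x : Fin d → ℤ, |f x| ^ s) ^ (1 / s)

namespace YH

def res {d : ℕ} (c : ℤ) (f : (Fin (d+1) → ℤ) → ℝ) : (Fin d → ℤ) → ℝ :=
  fun x => f (Fin.cons c x)

def toZ : Bool → ℤ := fun b => if b then 1 else 0

def emb {d : ℕ} (ε : Fin d → Bool) : Fin d → ℤ := fun i => toZ (ε i)

def emb3 {d : ℕ} (m : Fin d → Fin 3) : Fin d → ℤ := fun i => (m i : ℤ)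

lemma res_supported {d : ℕ} {c : ℤ} {f : (Fin (d+1) → ℤ) → ℝ}
    (hf : SupportedInCube f) : SupportedInCube (res c f) := by
  intro x hx
  apply hf
  intro hcube
  apply hx
  intro i
  have := hcube i.succ
  rwa [Fin.cons_succ] at this

lemma res_zero {d : ℕ} {c : ℤ} {f : (Fin (d+1) → ℤ) → ℝ}
    (hf : SupportedInCube f) (h0 : c ≠ 0) (h1 : c ≠ 1) :
    res c f = fun _ => 0 := by
  funext x
  apply hf
  intro hcube
  have := hcube 0
  rw [Fin.cons_zero] at this
  tauto

lemma cconv_fun_zero {d : ℕ} (f : (Fin d → ℤ) → ℝ) (m : Fin d → ℤ) :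
    cconv f (fun _ => 0) m = 0 := by simp [cconv]

lemma emb_cons {d : ℕ} (b : Bool) (ε : Fin d → Bool) :
    emb (Fin.cons b ε) = Fin.cons (toZ b) (emb ε) := by
  funext i
  induction i using Fin.cases <;> simp [emb]

lemma emb3_cons {d : ℕ} (j : Fin 3) (m : Fin d → Fin 3) :
    emb3 (Fin.cons j m) = Fin.cons (j : ℤ) (emb3 m) := by
  funext i
  induction i using Fin.cases <;> simp [emb3]

lemma cons_sub {d : ℕ} (a b : ℤ) (x y : Fin d → ℤ) :
    (Fin.cons a x : Fin (d+1) → ℤ) - Fin.cons b y = Fin.cons (a - b) (x - y) := by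
  funext i
  induction i using Fin.cases <;> simp

lemma emb_injective {d : ℕ} : Function.Injective (emb (d := d)) := by
  intro a b h
  funext i
  have h' := congrFun h i
  cases ha : a i <;> cases hb : b i <;> simp [emb, toZ, ha, hb] at h' ⊢

lemma emb3_injective {d : ℕ} : Function.Injective (emb3 (d := d)) := by
  intro a b h
  funext i
  have := congrFun h i
  simp only [emb3, Int.natCast_inj] at this
  exact Fin.ext (by exact_mod_cast this)

lemma inCube_emb {d : ℕ} (ε : Fin d → Bool) : InCube (emb ε) := by
  intro i; cases ε i <;> simp [emb, toZ]

lemma inCube_iff {d : ℕ} {x : Fin d → ℤ} : InCube x ↔ ∃ ε, emb ε = x := by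
  constructor
  · intro h
    refine ⟨fun i => decide (x i = 1), funext fun i => ?_⟩
    rcases h i with h' | h' <;> simp [emb, toZ, h']
  · rintro ⟨ε, rfl⟩; exact inCube_emb ε

lemma cconv_eq_sum {d : ℕ} (f g : (Fin d → ℤ) → ℝ) (hf : SupportedInCube f)
    (m : Fin d → ℤ) :
    cconv f g m = ∑ ε : Fin d → Bool, f (emb ε) * g (m - emb ε) := by
  rw [cconv]
  rw [tsum_eq_sum (s := Finset.image emb Finset.univ) (by
    intro u hu
    have : ¬ InCube u := by
      intro hc
      rcases inCube_iff.mp hc with ⟨ε, rfl⟩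
      exact hu (Finset.mem_image_of_mem _ (Finset.mem_univ ε))
    rw [hf u this, zero_mul])]
  rw [Finset.sum_image (fun a _ b _ h => emb_injective h)]

lemma lnorm_eq_sum {d : ℕ} (s : ℝ) (hs : s ≠ 0) (f : (Fin d → ℤ) → ℝ)
    (hf : SupportedInCube f) :
    lnorm s f = (∑ ε : Fin d → Bool, |f (emb ε)| ^ s) ^ (1 / s) := by
  rw [lnorm]
  rw [tsum_eq_sum (s := Finset.image emb Finset.univ) (by
    intro u hu
    have : ¬ InCube u := by
      intro hc
      rcases inCube_iff.mp hc with ⟨ε, rfl⟩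
      exact hu (Finset.mem_image_of_mem _ (Finset.mem_univ ε))
    rw [hf u this, abs_zero, Real.zero_rpow hs])]
  rw [Finset.sum_image (fun a _ b _ h => emb_injective h)]

lemma cconv_support {d : ℕ} (f g : (Fin d → ℤ) → ℝ) (hf : SupportedInCube f)
    (hg : SupportedInCube g) (m : Fin d → ℤ) (hm : ¬ ∃ m', emb3 m' = m) :
    cconv f g m = 0 := by
  rw [cconv_eq_sum f g hf]
  apply Finset.sum_eq_zero
  intro ε _
  by_contra h
  have hfe : f (emb ε) ≠ 0 := fun h' => h (by rw [h', zero_mul])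
  have hge : g (m - emb ε) ≠ 0 := fun h' => h (by rw [h', mul_zero])
  have h1 : InCube (m - emb ε) := by
    by_contra hc; exact hge (hg _ hc)
  apply hm
  have hbound : ∀ i, 0 ≤ m i ∧ m i < 3 := by
    intro i
    have := h1 i
    simp only [Pi.sub_apply] at this
    have h2 : emb ε i = 0 ∨ emb ε i = 1 := inCube_emb ε i
    omega
  refine ⟨fun i => ⟨(m i).toNat, by have := hbound i; omega⟩, funext fun i => ?_⟩
  have := hbound i
  simp only [emb3]
  push_cast
  omega

lemma lnorm_cconv_eq_sum {d : ℕ} (s : ℝ) (hs : s ≠ 0) (f g : (Fin d → ℤ) → ℝ)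
    (hf : SupportedInCube f) (hg : SupportedInCube g) :
    lnorm s (cconv f g) = (∑ m : Fin d → Fin 3, |cconv f g (emb3 m)| ^ s) ^ (1 / s) := by
  rw [lnorm]
  rw [tsum_eq_sum (s := Finset.image emb3 Finset.univ) (by
    intro u hu
    have : cconv f g u = 0 := by
      apply cconv_support f g hf hg
      rintro ⟨m', rfl⟩
      exact hu (Finset.mem_image_of_mem _ (Finset.mem_univ m'))
    rw [this, abs_zero, Real.zero_rpow hs])]
  rw [Finset.sum_image (fun a _ b _ h => emb3_injective h)]


lemma split {d : ℕ} (f g : (Fin (d+1) → ℤ) → ℝ) (hf : SupportedInCube f)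
    (hg : SupportedInCube g) (j : ℤ) (m : Fin d → ℤ) :
    cconv f g (Fin.cons j m) =
      cconv (res 0 f) (res j g) m + cconv (res 1 f) (res (j-1) g) m := by
  rw [cconv_eq_sum f g hf, cconv_eq_sum _ _ (res_supported hf),
    cconv_eq_sum _ _ (res_supported hf)]
  rw [← Fintype.sum_equiv (Fin.consEquiv (fun _ : Fin (d+1) => Bool))
    (fun bε => f (emb (Fin.cons bε.1 bε.2 : Fin (d+1) → Bool)) *
      g ((Fin.cons j m : Fin (d+1) → ℤ) - emb (Fin.cons bε.1 bε.2 : Fin (d+1) → Bool)))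
    (fun ε => f (emb ε) * g ((Fin.cons j m : Fin (d+1) → ℤ) - emb ε)) (fun ⟨b, ε⟩ => rfl)]
  rw [Fintype.sum_prod_type, Fintype.sum_bool]
  have key : ∀ (b : Bool) (ε : Fin d → Bool),
      f (emb (Fin.cons b ε : Fin (d+1) → Bool)) *
        g ((Fin.cons j m : Fin (d+1) → ℤ) - emb (Fin.cons b ε : Fin (d+1) → Bool))
        = res (toZ b) f (emb ε) * res (j - toZ b) g (m - emb ε) := by
    intro b ε
    rw [emb_cons, cons_sub]
    rfl
  simp only [key]
  have ht : toZ true = 1 := rfl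
  have hf' : toZ false = 0 := rfl
  rw [ht, hf']
  rw [sub_zero]
  ring



variable {r p q : ℝ}

-- scaling helper: c * u^(1/s) = (c^s * u)^(1/s)
lemma scale_rpow {s c u : ℝ} (hs : s ≠ 0) (hc : 0 ≤ c) (hu : 0 ≤ u) :
    c * u ^ (1 / s) = (c ^ s * u) ^ (1 / s) := by
  rw [Real.mul_rpow (Real.rpow_nonneg hc s) hu,
    ← Real.rpow_mul hc, mul_one_div, div_self hs, Real.rpow_one]

lemma monoQ (hr : 0 < r) (hq : 0 < q)
    (hnum : ∀ y : ℝ, 0 ≤ y → (1 + y ^ r) ^ (1 / r) ≤ (1 + y ^ q) ^ (1 / q))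
    {B₀ B₁ : ℝ} (h0 : 0 ≤ B₀) (h1 : 0 ≤ B₁) :
    (B₀ ^ r + B₁ ^ r) ^ (1 / r) ≤ (B₀ ^ q + B₁ ^ q) ^ (1 / q) := by
  rcases eq_or_lt_of_le h0 with h | h
  · rw [← h, Real.zero_rpow (ne_of_gt hr), Real.zero_rpow (ne_of_gt hq), zero_add, zero_add,
      ← Real.rpow_mul h1, ← Real.rpow_mul h1, mul_one_div, div_self (ne_of_gt hr),
      mul_one_div, div_self (ne_of_gt hq)]
  · have key := hnum (B₁ / B₀) (div_nonneg h1 (le_of_lt h))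
    have e1 : B₀ * (1 + (B₁ / B₀) ^ r) ^ (1 / r) = (B₀ ^ r + B₁ ^ r) ^ (1 / r) := by
      rw [scale_rpow (ne_of_gt hr) (le_of_lt h) (by positivity), mul_add, mul_one,
        Real.div_rpow h1 (le_of_lt h), mul_div_cancel₀]
      positivity
    have e2 : B₀ * (1 + (B₁ / B₀) ^ q) ^ (1 / q) = (B₀ ^ q + B₁ ^ q) ^ (1 / q) := by
      rw [scale_rpow (ne_of_gt hq) (le_of_lt h) (by positivity), mul_add, mul_one,
        Real.div_rpow h1 (le_of_lt h), mul_div_cancel₀]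
      positivity
    calc (B₀ ^ r + B₁ ^ r) ^ (1 / r) = B₀ * (1 + (B₁ / B₀) ^ r) ^ (1 / r) := e1.symm
      _ ≤ B₀ * (1 + (B₁ / B₀) ^ q) ^ (1 / q) := by
          apply mul_le_mul_of_nonneg_left key (le_of_lt h)
      _ = (B₀ ^ q + B₁ ^ q) ^ (1 / q) := e2





variable {r p q : ℝ}

lemma twoPoint (hr : 0 < r) (hp : 0 < p) (hq : 0 < q)
    (hnum : ∀ x y : ℝ, 0 ≤ x → 0 ≤ y →
      (1 + (x + y) ^ r + (x * y) ^ r) ^ (1 / r) ≤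
        (1 + x ^ p) ^ (1 / p) * (1 + y ^ q) ^ (1 / q))
    {A₀ A₁ B₀ B₁ : ℝ} (hA0 : 0 ≤ A₀) (hA1 : 0 ≤ A₁) (hB0 : 0 ≤ B₀) (hB1 : 0 ≤ B₁) :
    ((A₀ * B₀) ^ r + (A₀ * B₁ + A₁ * B₀) ^ r + (A₁ * B₁) ^ r) ^ (1 / r) ≤
      (A₀ ^ p + A₁ ^ p) ^ (1 / p) * (B₀ ^ q + B₁ ^ q) ^ (1 / q) := by
  have hnumQ : ∀ y : ℝ, 0 ≤ y → (1 + y ^ r) ^ (1 / r) ≤ (1 + y ^ q) ^ (1 / q) := by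
    intro y hy
    have := hnum 0 y le_rfl hy
    simpa [Real.zero_rpow (ne_of_gt hr), Real.zero_rpow (ne_of_gt hp)] using this
  have hnumP : ∀ x : ℝ, 0 ≤ x → (1 + x ^ r) ^ (1 / r) ≤ (1 + x ^ p) ^ (1 / p) := by
    intro x hx
    have := hnum x 0 hx le_rfl
    simpa [Real.zero_rpow (ne_of_gt hr), Real.zero_rpow (ne_of_gt hq)] using this
  rcases eq_or_lt_of_le hA0 with h0 | h0
  · -- A₀ = 0
    subst h0
    have e : ((0:ℝ) * B₀) ^ r + (0 * B₁ + A₁ * B₀) ^ r + (A₁ * B₁) ^ r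
        = A₁ ^ r * B₀ ^ r + A₁ ^ r * B₁ ^ r := by
      rw [zero_mul, zero_mul, zero_add, Real.zero_rpow (ne_of_gt hr), zero_add,
        Real.mul_rpow hA1 hB0, Real.mul_rpow hA1 hB1]
    rw [e, ← mul_add, ← scale_rpow (ne_of_gt hr) hA1 (by positivity),
      Real.zero_rpow (ne_of_gt hp), zero_add,
      show (A₁ ^ p) ^ (1/p) = A₁ by rw [one_div, Real.rpow_rpow_inv hA1 (ne_of_gt hp)]]
    exact mul_le_mul_of_nonneg_left (monoQ hr hq hnumQ hB0 hB1) hA1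
  rcases eq_or_lt_of_le hB0 with h1 | h1
  · -- B₀ = 0
    subst h1
    have e : (A₀ * 0) ^ r + (A₀ * B₁ + A₁ * 0) ^ r + (A₁ * B₁) ^ r
        = B₁ ^ r * A₀ ^ r + B₁ ^ r * A₁ ^ r := by
      rw [mul_zero, mul_zero, add_zero, Real.zero_rpow (ne_of_gt hr), zero_add,
        Real.mul_rpow hA0 hB1, Real.mul_rpow hA1 hB1]
      ring
    rw [e, ← mul_add, ← scale_rpow (ne_of_gt hr) hB1 (by positivity),
      Real.zero_rpow (ne_of_gt hq), zero_add]
    have : (B₁ ^ q) ^ (1/q) = B₁ := by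
      rw [one_div, Real.rpow_rpow_inv hB1 (ne_of_gt hq)]
    rw [this, mul_comm ((A₀ ^ p + A₁ ^ p) ^ (1/p)) B₁]
    exact mul_le_mul_of_nonneg_left (monoQ hr hp hnumP hA0 hA1) hB1
  · -- A₀ > 0, B₀ > 0
    have hx : (0:ℝ) ≤ A₁ / A₀ := div_nonneg hA1 (le_of_lt h0)
    have hy : (0:ℝ) ≤ B₁ / B₀ := div_nonneg hB1 (le_of_lt h1)
    have key := hnum _ _ hx hy
    have hAB : (0:ℝ) < A₀ * B₀ := mul_pos h0 h1
    have eL : (A₀ * B₀) * (1 + (A₁/A₀ + B₁/B₀) ^ r + ((A₁/A₀) * (B₁/B₀)) ^ r) ^ (1/r)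
        = ((A₀ * B₀) ^ r + (A₀ * B₁ + A₁ * B₀) ^ r + (A₁ * B₁) ^ r) ^ (1/r) := by
      rw [scale_rpow (ne_of_gt hr) (le_of_lt hAB) (by positivity), mul_add, mul_add, mul_one,
        ← Real.mul_rpow (le_of_lt hAB) (by positivity),
        ← Real.mul_rpow (le_of_lt hAB) (by positivity)]
      congr 2
      · congr 1
        field_simp
        ring
      · congr 1
        field_simp
    have eP : A₀ * (1 + (A₁/A₀) ^ p) ^ (1/p) = (A₀ ^ p + A₁ ^ p) ^ (1/p) := by
      rw [scale_rpow (ne_of_gt hp) (le_of_lt h0) (by positivity), mul_add, mul_one,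
        Real.div_rpow hA1 (le_of_lt h0), mul_div_cancel₀]
      positivity
    have eQ : B₀ * (1 + (B₁/B₀) ^ q) ^ (1/q) = (B₀ ^ q + B₁ ^ q) ^ (1/q) := by
      rw [scale_rpow (ne_of_gt hq) (le_of_lt h1) (by positivity), mul_add, mul_one,
        Real.div_rpow hB1 (le_of_lt h1), mul_div_cancel₀]
      positivity
    calc ((A₀ * B₀) ^ r + (A₀ * B₁ + A₁ * B₀) ^ r + (A₁ * B₁) ^ r) ^ (1/r)
        = (A₀ * B₀) * (1 + (A₁/A₀ + B₁/B₀) ^ r + ((A₁/A₀) * (B₁/B₀)) ^ r) ^ (1/r) := eL.symm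
      _ ≤ (A₀ * B₀) * ((1 + (A₁/A₀) ^ p) ^ (1/p) * (1 + (B₁/B₀) ^ q) ^ (1/q)) :=
          mul_le_mul_of_nonneg_left key (le_of_lt hAB)
      _ = (A₀ * (1 + (A₁/A₀) ^ p) ^ (1/p)) * (B₀ * (1 + (B₁/B₀) ^ q) ^ (1/q)) := by ring
      _ = (A₀ ^ p + A₁ ^ p) ^ (1/p) * (B₀ ^ q + B₁ ^ q) ^ (1/q) := by rw [eP, eQ]



lemma cconv_nonneg {d : ℕ} (f g : (Fin d → ℤ) → ℝ) (hf : SupportedInCube f)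
    (hf0 : ∀ x, 0 ≤ f x) (hg0 : ∀ x, 0 ≤ g x) (m : Fin d → ℤ) :
    0 ≤ cconv f g m := by
  rw [cconv_eq_sum f g hf]
  exact Finset.sum_nonneg fun ε _ => mul_nonneg (hf0 _) (hg0 _)

lemma core {r p q : ℝ} (hr1 : 1 ≤ r) (hp : 0 < p) (hq : 0 < q)
    (hnum : ∀ x y : ℝ, 0 ≤ x → 0 ≤ y →
      (1 + (x + y) ^ r + (x * y) ^ r) ^ (1 / r) ≤
        (1 + x ^ p) ^ (1 / p) * (1 + y ^ q) ^ (1 / q)) :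
    ∀ (d : ℕ) (f g : (Fin d → ℤ) → ℝ), SupportedInCube f → SupportedInCube g →
      (∀ x, 0 ≤ f x) → (∀ x, 0 ≤ g x) →
      (∑ m : Fin d → Fin 3, (cconv f g (emb3 m)) ^ r) ^ (1/r) ≤
        (∑ ε : Fin d → Bool, (f (emb ε)) ^ p) ^ (1/p) *
        (∑ η : Fin d → Bool, (g (emb η)) ^ q) ^ (1/q) := by
  have hr : (0:ℝ) < r := lt_of_lt_of_le one_pos hr1
  intro d
  induction d with
  | zero =>
    intro f g hf hg hf0 hg0
    rw [Fintype.sum_unique, Fintype.sum_unique, Fintype.sum_unique,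
      cconv_eq_sum f g hf, Fintype.sum_unique]
    have key : ∀ (a b c e : Fin 0 → ℤ), ((f a * g b) ^ r) ^ (1/r) ≤
        ((f c) ^ p) ^ (1/p) * ((g e) ^ q) ^ (1/q) := by
      intro a b c e
      rw [Subsingleton.elim a c, Subsingleton.elim b e]
      rw [one_div, one_div, one_div,
        Real.rpow_rpow_inv (mul_nonneg (hf0 _) (hg0 _)) (ne_of_gt hr),
        Real.rpow_rpow_inv (hf0 _) (ne_of_gt hp),
        Real.rpow_rpow_inv (hg0 _) (ne_of_gt hq)]
    exact key _ _ _ _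
  | succ d ih =>
    intro f g hf hg hf0 hg0
    have hF0 : SupportedInCube (res 0 f) := res_supported hf
    have hF1 : SupportedInCube (res 1 f) := res_supported hf
    have hG0 : SupportedInCube (res 0 g) := res_supported hg
    have hG1 : SupportedInCube (res 1 g) := res_supported hg
    have hF00 : ∀ x, 0 ≤ res 0 f x := fun x => hf0 _
    have hF10 : ∀ x, 0 ≤ res 1 f x := fun x => hf0 _
    have hG00 : ∀ x, 0 ≤ res 0 g x := fun x => hg0 _
    have hG10 : ∀ x, 0 ≤ res 1 g x := fun x => hg0 _
    set SA0 := ∑ ε : Fin d → Bool, (res 0 f (emb ε)) ^ p with hSA0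
    set SA1 := ∑ ε : Fin d → Bool, (res 1 f (emb ε)) ^ p with hSA1
    set SB0 := ∑ η : Fin d → Bool, (res 0 g (emb η)) ^ q with hSB0
    set SB1 := ∑ η : Fin d → Bool, (res 1 g (emb η)) ^ q with hSB1
    have hSA0n : 0 ≤ SA0 := Finset.sum_nonneg fun ε _ => Real.rpow_nonneg (hF00 _) _
    have hSA1n : 0 ≤ SA1 := Finset.sum_nonneg fun ε _ => Real.rpow_nonneg (hF10 _) _
    have hSB0n : 0 ≤ SB0 := Finset.sum_nonneg fun ε _ => Real.rpow_nonneg (hG00 _) _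
    have hSB1n : 0 ≤ SB1 := Finset.sum_nonneg fun ε _ => Real.rpow_nonneg (hG10 _) _
    set A0 := SA0 ^ (1/p)
    set A1 := SA1 ^ (1/p)
    set B0 := SB0 ^ (1/q)
    set B1 := SB1 ^ (1/q)
    have hA0n : 0 ≤ A0 := Real.rpow_nonneg hSA0n _
    have hA1n : 0 ≤ A1 := Real.rpow_nonneg hSA1n _
    have hB0n : 0 ≤ B0 := Real.rpow_nonneg hSB0n _
    have hB1n : 0 ≤ B1 := Real.rpow_nonneg hSB1n _
    have h00 := ih (res 0 f) (res 0 g) hF0 hG0 hF00 hG00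
    have h01 := ih (res 0 f) (res 1 g) hF0 hG1 hF00 hG10
    have h10 := ih (res 1 f) (res 0 g) hF1 hG0 hF10 hG00
    have h11 := ih (res 1 f) (res 1 g) hF1 hG1 hF10 hG10
    -- decomposition of the left-hand sum
    have hL : ∑ m : Fin (d+1) → Fin 3, (cconv f g (emb3 m)) ^ r
        = (∑ m : Fin d → Fin 3, (cconv (res 0 f) (res 0 g) (emb3 m)) ^ r)
        + (∑ m : Fin d → Fin 3,
            (cconv (res 0 f) (res 1 g) (emb3 m) + cconv (res 1 f) (res 0 g) (emb3 m)) ^ r)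
        + (∑ m : Fin d → Fin 3, (cconv (res 1 f) (res 1 g) (emb3 m)) ^ r) := by
      rw [← Fintype.sum_equiv (Fin.consEquiv (fun _ : Fin (d+1) => Fin 3))
        (fun jm => (cconv f g (emb3 (Fin.cons jm.1 jm.2 : Fin (d+1) → Fin 3))) ^ r)
        (fun m => (cconv f g (emb3 m)) ^ r) (fun ⟨j, m⟩ => rfl)]
      rw [Fintype.sum_prod_type, Fin.sum_univ_three]
      congr 1
      · congr 1
        · apply Finset.sum_congr rfl; intro m' _
          rw [emb3_cons, show (((0:Fin 3)):ℤ) = 0 from rfl,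
            split f g hf hg 0 (emb3 m'),
            res_zero hg (show (0:ℤ)-1 ≠ 0 by norm_num) (show (0:ℤ)-1 ≠ 1 by norm_num),
            cconv_fun_zero, add_zero]
        · apply Finset.sum_congr rfl; intro m' _
          rw [emb3_cons, show (((1:Fin 3)):ℤ) = 1 from rfl,
            split f g hf hg 1 (emb3 m'),
            show (1:ℤ)-1 = 0 from by norm_num]
      · apply Finset.sum_congr rfl; intro m' _
        rw [emb3_cons, show (((2:Fin 3)):ℤ) = 2 from rfl,
          split f g hf hg 2 (emb3 m'),
          res_zero hg (show (2:ℤ) ≠ 0 by norm_num) (show (2:ℤ) ≠ 1 by norm_num),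
          cconv_fun_zero, zero_add,
          show (2:ℤ)-1 = 1 from by norm_num]
    -- decomposition of the right-hand sums
    have hP : ∑ ε : Fin (d+1) → Bool, (f (emb ε)) ^ p = SA1 + SA0 := by
      rw [← Fintype.sum_equiv (Fin.consEquiv (fun _ : Fin (d+1) => Bool))
        (fun bε => (f (emb (Fin.cons bε.1 bε.2 : Fin (d+1) → Bool))) ^ p)
        (fun ε => (f (emb ε)) ^ p) (fun ⟨b, ε⟩ => rfl)]
      rw [Fintype.sum_prod_type, Fintype.sum_bool]
      congr 1 <;> · apply Finset.sum_congr rfl; intro ε _; rw [emb_cons]; rfl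
    have hQ : ∑ η : Fin (d+1) → Bool, (g (emb η)) ^ q = SB1 + SB0 := by
      rw [← Fintype.sum_equiv (Fin.consEquiv (fun _ : Fin (d+1) => Bool))
        (fun bε => (g (emb (Fin.cons bε.1 bε.2 : Fin (d+1) → Bool))) ^ q)
        (fun η => (g (emb η)) ^ q) (fun ⟨b, ε⟩ => rfl)]
      rw [Fintype.sum_prod_type, Fintype.sum_bool]
      congr 1 <;> · apply Finset.sum_congr rfl; intro ε _; rw [emb_cons]; rfl
    -- termwise bounds
    have sumnn : ∀ (F G : (Fin d → ℤ) → ℝ), SupportedInCube F → (∀ x, 0 ≤ F x) → (∀ x, 0 ≤ G x) →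
        0 ≤ ∑ m : Fin d → Fin 3, (cconv F G (emb3 m)) ^ r := fun F G hF hF0 hG0 =>
      Finset.sum_nonneg fun m _ => Real.rpow_nonneg (cconv_nonneg F G hF hF0 hG0 _) _
    have pow_r_bound : ∀ (S C : ℝ), 0 ≤ S → 0 ≤ C → S ^ (1/r) ≤ C → S ≤ C ^ r := by
      intro S C hS hC h
      calc S = (S ^ (1/r)) ^ r := by
            rw [one_div, Real.rpow_inv_rpow hS (ne_of_gt hr)]
        _ ≤ C ^ r := Real.rpow_le_rpow (Real.rpow_nonneg hS _) h (le_of_lt hr)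
    have bound0 : ∑ m : Fin d → Fin 3, (cconv (res 0 f) (res 0 g) (emb3 m)) ^ r ≤ (A0 * B0) ^ r :=
      pow_r_bound _ _ (sumnn _ _ hF0 hF00 hG00) (mul_nonneg hA0n hB0n) h00
    have bound2 : ∑ m : Fin d → Fin 3, (cconv (res 1 f) (res 1 g) (emb3 m)) ^ r ≤ (A1 * B1) ^ r :=
      pow_r_bound _ _ (sumnn _ _ hF1 hF10 hG10) (mul_nonneg hA1n hB1n) h11
    have bound1 : ∑ m : Fin d → Fin 3,
        (cconv (res 0 f) (res 1 g) (emb3 m) + cconv (res 1 f) (res 0 g) (emb3 m)) ^ r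
        ≤ (A0 * B1 + A1 * B0) ^ r := by
      apply pow_r_bound
      · exact Finset.sum_nonneg fun m _ => Real.rpow_nonneg
          (add_nonneg (cconv_nonneg _ _ hF0 hF00 hG10 _) (cconv_nonneg _ _ hF1 hF10 hG00 _)) _
      · exact add_nonneg (mul_nonneg hA0n hB1n) (mul_nonneg hA1n hB0n)
      · have mink := Real.Lp_add_le Finset.univ
          (fun m : Fin d → Fin 3 => cconv (res 0 f) (res 1 g) (emb3 m))
          (fun m : Fin d → Fin 3 => cconv (res 1 f) (res 0 g) (emb3 m)) hr1
        have e1 : ∑ m : Fin d → Fin 3,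
            |cconv (res 0 f) (res 1 g) (emb3 m) + cconv (res 1 f) (res 0 g) (emb3 m)| ^ r
            = ∑ m : Fin d → Fin 3,
            (cconv (res 0 f) (res 1 g) (emb3 m) + cconv (res 1 f) (res 0 g) (emb3 m)) ^ r :=
          Finset.sum_congr rfl fun m _ => by
            rw [abs_of_nonneg (add_nonneg (cconv_nonneg _ _ hF0 hF00 hG10 _)
              (cconv_nonneg _ _ hF1 hF10 hG00 _))]
        have e2 : ∑ m : Fin d → Fin 3, |cconv (res 0 f) (res 1 g) (emb3 m)| ^ r
            = ∑ m : Fin d → Fin 3, (cconv (res 0 f) (res 1 g) (emb3 m)) ^ r :=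
          Finset.sum_congr rfl fun m _ => by
            rw [abs_of_nonneg (cconv_nonneg _ _ hF0 hF00 hG10 _)]
        have e3 : ∑ m : Fin d → Fin 3, |cconv (res 1 f) (res 0 g) (emb3 m)| ^ r
            = ∑ m : Fin d → Fin 3, (cconv (res 1 f) (res 0 g) (emb3 m)) ^ r :=
          Finset.sum_congr rfl fun m _ => by
            rw [abs_of_nonneg (cconv_nonneg _ _ hF1 hF10 hG00 _)]
        rw [e1, e2, e3] at mink
        exact le_trans mink (add_le_add h01 h10)
    have total : ∑ m : Fin (d+1) → Fin 3, (cconv f g (emb3 m)) ^ r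
        ≤ (A0 * B0) ^ r + (A0 * B1 + A1 * B0) ^ r + (A1 * B1) ^ r := by
      rw [hL]
      exact add_le_add (add_le_add bound0 bound1) bound2
    have tp := twoPoint hr hp hq hnum hA0n hA1n hB0n hB1n
    have hA0p : A0 ^ p = SA0 := by
      show (SA0 ^ (1/p)) ^ p = SA0
      rw [one_div, Real.rpow_inv_rpow hSA0n (ne_of_gt hp)]
    have hA1p : A1 ^ p = SA1 := by
      show (SA1 ^ (1/p)) ^ p = SA1
      rw [one_div, Real.rpow_inv_rpow hSA1n (ne_of_gt hp)]
    have hB0q : B0 ^ q = SB0 := by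
      show (SB0 ^ (1/q)) ^ q = SB0
      rw [one_div, Real.rpow_inv_rpow hSB0n (ne_of_gt hq)]
    have hB1q : B1 ^ q = SB1 := by
      show (SB1 ^ (1/q)) ^ q = SB1
      rw [one_div, Real.rpow_inv_rpow hSB1n (ne_of_gt hq)]
    rw [hA0p, hA1p, hB0q, hB1q] at tp
    rw [hP, hQ, add_comm SA1 SA0, add_comm SB1 SB0]
    calc (∑ m : Fin (d+1) → Fin 3, (cconv f g (emb3 m)) ^ r) ^ (1/r)
        ≤ ((A0 * B0) ^ r + (A0 * B1 + A1 * B0) ^ r + (A1 * B1) ^ r) ^ (1/r) := by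
          apply Real.rpow_le_rpow _ total (by positivity)
          exact Finset.sum_nonneg fun m _ => Real.rpow_nonneg
            (cconv_nonneg f g hf hf0 hg0 _) _
      _ ≤ (SA0 + SA1) ^ (1/p) * (SB0 + SB1) ^ (1/q) := tp

end YH

theorem young_hypercube_from_numerical (d : ℕ) (hd : 1 ≤ d) (r p q : ℝ)
    (hr : 1 < r) (hp1 : 1 ≤ p) (hpr : p ≤ r) (hq1 : 1 ≤ q) (hqr : q ≤ r)
    (hnum : ∀ x y : ℝ, 0 ≤ x → 0 ≤ y →
      (1 + (x + y) ^ r + (x * y) ^ r) ^ (1 / r) ≤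
        (1 + x ^ p) ^ (1 / p) * (1 + y ^ q) ^ (1 / q))
    (f g : (Fin d → ℤ) → ℝ) (hf : SupportedInCube f) (hg : SupportedInCube g) :
    lnorm r (cconv f g) ≤ lnorm p f * lnorm q g := by
  have hr0 : (0:ℝ) < r := lt_trans one_pos hr
  have hp0 : (0:ℝ) < p := lt_of_lt_of_le one_pos hp1
  have hq0 : (0:ℝ) < q := lt_of_lt_of_le one_pos hq1
  have hf' : SupportedInCube (fun x => |f x|) := fun x hx => by
    simp only [hf x hx, abs_zero]
  have hg' : SupportedInCube (fun x => |g x|) := fun x hx => by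
    simp only [hg x hx, abs_zero]
  have hcore := YH.core (le_of_lt hr) hp0 hq0 hnum d (fun x => |f x|) (fun x => |g x|)
    hf' hg' (fun x => abs_nonneg _) (fun x => abs_nonneg _)
  rw [YH.lnorm_cconv_eq_sum r (ne_of_gt hr0) f g hf hg,
    YH.lnorm_eq_sum p (ne_of_gt hp0) f hf, YH.lnorm_eq_sum q (ne_of_gt hq0) g hg]
  refine le_trans ?_ hcore
  apply Real.rpow_le_rpow
    (Finset.sum_nonneg fun m _ => Real.rpow_nonneg (abs_nonneg _) _) ?_ (by positivity)
  apply Finset.sum_le_sum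
  intro m _
  apply Real.rpow_le_rpow (abs_nonneg _) ?_ (le_of_lt hr0)
  rw [YH.cconv_eq_sum f g hf, YH.cconv_eq_sum _ _ hf']
  refine le_trans (Finset.abs_sum_le_sum_abs _ _) (le_of_eq ?_)
  refine Finset.sum_congr rfl fun ε _ => ?_
  simp [abs_mul]
end

section
/- Let d ≥ 1, 0 < r < 1 and p, q ≥ r. Assume that for all real x, y ≥ 0 the numerical inequality (1 + (x + y)^r + (xy)^r)^{1/r} ≥ (1 + x^p)^{1/p} (1 + y^q)^{1/q} holds. Then for all f, g : ℤ^d → [0,∞) supported in {0,1}^d one has ‖f*g‖_{ℓ^r(ℤ^d)} ≥ ‖f‖_{ℓ^p(ℤ^d)} ‖g‖_{ℓ^q(ℤ^d)}. -/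
open scoped BigOperators ENNReal

/-! Induct on `d`, slicing along the first coordinate: `f` splits into `f₀, f₁` and `g` into
`g₀, g₁` on `ℤ^(d-1)`, and `f * g` into the slices `f₀ * g₀`, `f₀ * g₁ + f₁ * g₀`, `f₁ * g₁`.
The induction hypothesis bounds `‖fᵢ * gⱼ‖_r` below by `‖fᵢ‖_p ‖gⱼ‖_q`, the reverse Minkowski
inequality (valid for `r ≤ 1`) handles the middle slice, and the two-point case `d = 1`, which is
the numerical inequality after scaling, combines the slice norms into `‖f‖_p ‖g‖_q`. -/

open Function
open scoped Pointwise

section RealInequalities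

variable {r : ℝ}

lemma rpow_one_div_rpow {s x : ℝ} (hx : 0 ≤ x) (hs : s ≠ 0) : (x ^ (1 / s)) ^ s = x := by
  rw [one_div, Real.rpow_inv_rpow hx hs]

lemma rpow_rpow_one_div {s x : ℝ} (hx : 0 ≤ x) (hs : s ≠ 0) : (x ^ s) ^ (1 / s) = x := by
  rw [one_div, Real.rpow_rpow_inv hx hs]

lemma mul_rpow_rpow_one_div {s c t : ℝ} (hs : s ≠ 0) (hc : 0 ≤ c) (ht : 0 ≤ t) :
    (c ^ s * t) ^ (1 / s) = c * t ^ (1 / s) := by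
  rw [Real.mul_rpow (Real.rpow_nonneg hc s) ht, rpow_rpow_one_div hc hs]

lemma rpow_one_sub_mul_rpow_add_le (hr0 : 0 < r) (hr1 : r ≤ 1) {x y a b : ℝ}
    (hx : 0 ≤ x) (hy : 0 ≤ y) (ha : 0 ≤ a) (hb : 0 ≤ b) (hab : a + b = 1) :
    a ^ (1 - r) * x ^ r + b ^ (1 - r) * y ^ r ≤ (x + y) ^ r := by
  rcases (add_nonneg hx hy).eq_or_lt with hS | hS
  · obtain ⟨rfl, rfl⟩ : x = 0 ∧ y = 0 := ⟨by linarith, by linarith⟩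
    simp [Real.zero_rpow hr0.ne']
  -- weighted AM-GM for the pairs `(x / (x + y), a)` and `(y / (x + y), b)`
  have amgm : ∀ z c, 0 ≤ z → 0 ≤ c →
      z ^ r / (x + y) ^ r * c ^ (1 - r) ≤ r * (z / (x + y)) + (1 - r) * c := fun z c hz hc => by
    rw [← Real.div_rpow hz hS.le]
    exact Real.geom_mean_le_arith_mean2_weighted hr0.le (by linarith) (div_nonneg hz hS.le) hc
      (by ring)
  rw [← div_le_one (Real.rpow_pos_of_pos hS r)]
  calc (a ^ (1 - r) * x ^ r + b ^ (1 - r) * y ^ r) / (x + y) ^ r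
      = x ^ r / (x + y) ^ r * a ^ (1 - r) + y ^ r / (x + y) ^ r * b ^ (1 - r) := by ring
    _ ≤ (r * (x / (x + y)) + (1 - r) * a) + (r * (y / (x + y)) + (1 - r) * b) :=
      add_le_add (amgm x a hx ha) (amgm y b hy hb)
    _ = 1 := by field_simp; linear_combination (1 - r) * (x + y) * hab

theorem Lp_add_Lp_le_Lp_add_of_le_one {ι : Type*} (hr0 : 0 < r) (hr1 : r ≤ 1) {f g : ι → ℝ}
    (hf : ∀ i, 0 ≤ f i) (hg : ∀ i, 0 ≤ g i) (hfs : Summable fun i => f i ^ r)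
    (hgs : Summable fun i => g i ^ r) (hfgs : Summable fun i => (f i + g i) ^ r) :
    (∑' i, f i ^ r) ^ (1 / r) + (∑' i, g i ^ r) ^ (1 / r) ≤ (∑' i, (f i + g i) ^ r) ^ (1 / r) := by
  set F := (∑' i, f i ^ r) ^ (1 / r)
  set G := (∑' i, g i ^ r) ^ (1 / r)
  have hF : 0 ≤ F := Real.rpow_nonneg (tsum_nonneg fun i => Real.rpow_nonneg (hf i) r) _
  have hG : 0 ≤ G := Real.rpow_nonneg (tsum_nonneg fun i => Real.rpow_nonneg (hg i) r) _
  have hFr : F ^ r = ∑' i, f i ^ r :=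
    rpow_one_div_rpow (tsum_nonneg fun i => Real.rpow_nonneg (hf i) r) hr0.ne'
  have hGr : G ^ r = ∑' i, g i ^ r :=
    rpow_one_div_rpow (tsum_nonneg fun i => Real.rpow_nonneg (hg i) r) hr0.ne'
  rcases (add_nonneg hF hG).eq_or_lt with hS | hS
  · rw [← hS]
    exact Real.rpow_nonneg (tsum_nonneg fun i => Real.rpow_nonneg (add_nonneg (hf i) (hg i)) r) _
  have weight : ∀ c, 0 ≤ c → (c / (F + G)) ^ (1 - r) * c ^ r = c / (F + G) * (F + G) ^ r := by
    intro c hc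
    have hcS : 0 ≤ c / (F + G) := div_nonneg hc hS.le
    rw [← div_mul_cancel₀ c hS.ne', Real.mul_rpow hcS hS.le, div_mul_cancel₀ c hS.ne', ← mul_assoc,
      ← Real.rpow_add' hcS (by simp), sub_add_cancel, Real.rpow_one]
  -- sum the pointwise bound with the weights `F / (F + G)` and `G / (F + G)`
  have hpow : (F + G) ^ r ≤ ∑' i, (f i + g i) ^ r := calc
    (F + G) ^ r = (F / (F + G)) ^ (1 - r) * F ^ r + (G / (F + G)) ^ (1 - r) * G ^ r := by
      rw [weight F hF, weight G hG]; field_simp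
    _ = ∑' i, ((F / (F + G)) ^ (1 - r) * f i ^ r + (G / (F + G)) ^ (1 - r) * g i ^ r) := by
      rw [(hfs.mul_left _).tsum_add (hgs.mul_left _), tsum_mul_left, tsum_mul_left, hFr, hGr]
    _ ≤ ∑' i, (f i + g i) ^ r :=
      ((hfs.mul_left _).add (hgs.mul_left _)).tsum_le_tsum (fun i =>
        rpow_one_sub_mul_rpow_add_le hr0 hr1 (hf i) (hg i) (div_nonneg hF hS.le)
          (div_nonneg hG hS.le) (by field_simp)) hfgs
  calc F + G = ((F + G) ^ r) ^ (1 / r) := (rpow_rpow_one_div (add_nonneg hF hG) hr0.ne').symm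
    _ ≤ _ := Real.rpow_le_rpow (Real.rpow_nonneg (add_nonneg hF hG) r) hpow (by positivity)

end RealInequalities

/-- The case `d = 1` of the theorem, for `f = (a₀, a₁)` and `g = (b₀, b₁)` on `{0, 1}`. -/
def TwoPointReverseYoung (r p q : ℝ) : Prop :=
  ∀ a₀ a₁ b₀ b₁ : ℝ, 0 ≤ a₀ → 0 ≤ a₁ → 0 ≤ b₀ → 0 ≤ b₁ →
    (a₀ ^ p + a₁ ^ p) ^ (1 / p) * (b₀ ^ q + b₁ ^ q) ^ (1 / q) ≤
      ((a₀ * b₀) ^ r + (a₀ * b₁ + a₁ * b₀) ^ r + (a₁ * b₁) ^ r) ^ (1 / r)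

lemma twoPointReverseYoung_of_numerical {r p q : ℝ} (hr0 : 0 < r) (hpr : r ≤ p) (hqr : r ≤ q)
    (hnum : ∀ x y : ℝ, 0 ≤ x → 0 ≤ y →
      (1 + x ^ p) ^ (1 / p) * (1 + y ^ q) ^ (1 / q) ≤
        (1 + (x + y) ^ r + (x * y) ^ r) ^ (1 / r)) :
    TwoPointReverseYoung r p q := by
  intro a₀ a₁ b₀ b₁ ha₀ ha₁ hb₀ hb₁
  have hp : p ≠ 0 := (hr0.trans_le hpr).ne'
  have hq : q ≠ 0 := (hr0.trans_le hqr).ne'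
  rcases ha₀.eq_or_lt with rfl | ha₀
  · have e : (0 * b₀) ^ r + (0 * b₁ + a₁ * b₀) ^ r + (a₁ * b₁) ^ r
        = a₁ ^ r * (b₀ ^ r + b₁ ^ r) := by
      simp only [zero_mul, zero_add, Real.zero_rpow hr0.ne', Real.mul_rpow ha₁ hb₀,
        Real.mul_rpow ha₁ hb₁]
      ring
    rw [e, mul_rpow_rpow_one_div hr0.ne' ha₁ (by positivity), Real.zero_rpow hp, zero_add,
      rpow_rpow_one_div ha₁ hp]
    exact mul_le_mul_of_nonneg_left (Real.rpow_add_rpow_le hb₀ hb₁ hr0 hqr) ha₁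
  rcases hb₀.eq_or_lt with rfl | hb₀
  · have e : (a₀ * 0) ^ r + (a₀ * b₁ + a₁ * 0) ^ r + (a₁ * b₁) ^ r
        = b₁ ^ r * (a₀ ^ r + a₁ ^ r) := by
      simp only [mul_zero, add_zero, zero_add, Real.zero_rpow hr0.ne', Real.mul_rpow ha₀.le hb₁,
        Real.mul_rpow ha₁ hb₁]
      ring
    rw [e, mul_rpow_rpow_one_div hr0.ne' hb₁ (by positivity), Real.zero_rpow hq, zero_add,
      rpow_rpow_one_div hb₁ hq, mul_comm b₁]
    exact mul_le_mul_of_nonneg_right (Real.rpow_add_rpow_le ha₀.le ha₁ hr0 hpr) hb₁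
  -- homogeneity reduces to `a₀ = b₀ = 1`, with `x = a₁ / a₀` and `y = b₁ / b₀`
  obtain ⟨x, hx, rfl⟩ : ∃ x, 0 ≤ x ∧ a₁ = a₀ * x :=
    ⟨a₁ / a₀, div_nonneg ha₁ ha₀.le, by field_simp⟩
  obtain ⟨y, hy, rfl⟩ : ∃ y, 0 ≤ y ∧ b₁ = b₀ * y :=
    ⟨b₁ / b₀, div_nonneg hb₁ hb₀.le, by field_simp⟩
  have hab : 0 ≤ a₀ * b₀ := by positivity
  have ea : a₀ ^ p + (a₀ * x) ^ p = a₀ ^ p * (1 + x ^ p) := by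
    rw [Real.mul_rpow ha₀.le hx]; ring
  have eb : b₀ ^ q + (b₀ * y) ^ q = b₀ ^ q * (1 + y ^ q) := by
    rw [Real.mul_rpow hb₀.le hy]; ring
  have eab : (a₀ * b₀) ^ r + (a₀ * (b₀ * y) + a₀ * x * b₀) ^ r + (a₀ * x * (b₀ * y)) ^ r
      = (a₀ * b₀) ^ r * (1 + (x + y) ^ r + (x * y) ^ r) := by
    rw [show a₀ * (b₀ * y) + a₀ * x * b₀ = a₀ * b₀ * (x + y) by ring,
      show a₀ * x * (b₀ * y) = a₀ * b₀ * (x * y) by ring, Real.mul_rpow hab (by positivity),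
      Real.mul_rpow hab (by positivity)]
    ring
  rw [ea, eb, eab, mul_rpow_rpow_one_div hp ha₀.le (by positivity),
    mul_rpow_rpow_one_div hq hb₀.le (by positivity),
    mul_rpow_rpow_one_div hr0.ne' hab (by positivity), mul_mul_mul_comm]
  exact mul_le_mul_of_nonneg_left (hnum x y hx hy) hab

section Lattice

variable {d : ℕ}

lemma tsum_eq_tsum_tsum_cons {φ : (Fin (d + 1) → ℤ) → ℝ} (hφ : (support φ).Finite) :
    ∑' x, φ x = ∑' (j : ℤ) (x : Fin d → ℤ), φ (Fin.cons j x) := by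
  rw [← (Fin.consEquiv fun _ => ℤ).tsum_eq]
  exact Summable.tsum_prod
    (summable_of_hasFiniteSupport (hφ.preimage (Fin.consEquiv _).injective.injOn))

def slice (f : (Fin (d + 1) → ℤ) → ℝ) (j : ℤ) : (Fin d → ℤ) → ℝ := fun x => f (Fin.cons j x)

lemma lnorm_nonneg (s : ℝ) (f : (Fin d → ℤ) → ℝ) : 0 ≤ lnorm s f :=
  Real.rpow_nonneg (tsum_nonneg fun _ => Real.rpow_nonneg (abs_nonneg _) s) _

lemma lnorm_rpow {s : ℝ} (hs : s ≠ 0) (f : (Fin d → ℤ) → ℝ) :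
    lnorm s f ^ s = ∑' x, |f x| ^ s :=
  rpow_one_div_rpow (tsum_nonneg fun _ => Real.rpow_nonneg (abs_nonneg _) s) hs

lemma lnorm_of_nonneg (s : ℝ) {f : (Fin d → ℤ) → ℝ} (hf : ∀ x, 0 ≤ f x) :
    lnorm s f = (∑' x, f x ^ s) ^ (1 / s) := by
  simp only [lnorm, abs_of_nonneg (hf _)]

lemma lnorm_zero {s : ℝ} (hs : s ≠ 0) : lnorm s (0 : (Fin d → ℤ) → ℝ) = 0 := by
  simp [lnorm, Real.zero_rpow hs, hs]

lemma lnorm_fin_zero {s : ℝ} (hs : s ≠ 0) (f : (Fin 0 → ℤ) → ℝ) : lnorm s f = |f 0| := by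
  rw [lnorm, tsum_eq_single 0 fun x hx => absurd (Subsingleton.elim x 0) hx,
    rpow_rpow_one_div (abs_nonneg _) hs]

lemma lnorm_rpow_eq_tsum_slice {s : ℝ} (hs : s ≠ 0) {f : (Fin (d + 1) → ℤ) → ℝ}
    (hf : (support f).Finite) : lnorm s f ^ s = ∑' j, lnorm s (slice f j) ^ s := by
  simp only [lnorm_rpow hs]
  exact tsum_eq_tsum_tsum_cons
    (hf.subset (support_comp_subset (g := fun t : ℝ => |t| ^ s) (by simp [Real.zero_rpow hs]) f))

lemma lnorm_eq_sum_slice {s : ℝ} (hs : s ≠ 0) {f : (Fin (d + 1) → ℤ) → ℝ}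
    (hf : (support f).Finite) {t : Finset ℤ} (ht : ∀ j ∉ t, slice f j = 0) :
    lnorm s f = (∑ j ∈ t, lnorm s (slice f j) ^ s) ^ (1 / s) := by
  conv_lhs => rw [← rpow_rpow_one_div (lnorm_nonneg s f) hs, lnorm_rpow_eq_tsum_slice hs hf]
  rw [tsum_eq_sum (s := t) fun j hj => by rw [ht j hj, lnorm_zero hs, Real.zero_rpow hs]]

lemma lnorm_add_lnorm_le_lnorm_add {r : ℝ} (hr0 : 0 < r) (hr1 : r ≤ 1)
    {f g : (Fin d → ℤ) → ℝ} (hf0 : ∀ x, 0 ≤ f x) (hg0 : ∀ x, 0 ≤ g x) (hf : (support f).Finite)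
    (hg : (support g).Finite) : lnorm r f + lnorm r g ≤ lnorm r (f + g) := by
  have summable : ∀ h : (Fin d → ℤ) → ℝ, (support h).Finite → Summable fun x => h x ^ r :=
    fun h hh => summable_of_hasFiniteSupport
      (hh.subset (support_comp_subset (g := fun t : ℝ => t ^ r) (Real.zero_rpow hr0.ne') h))
  rw [lnorm_of_nonneg r hf0, lnorm_of_nonneg r hg0,
    lnorm_of_nonneg (f := f + g) r fun x => add_nonneg (hf0 x) (hg0 x)]
  exact Lp_add_Lp_le_Lp_add_of_le_one hr0 hr1 hf0 hg0 (summable f hf) (summable g hg)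
    (summable _ ((hf.union hg).subset (support_add f g)))

@[simp]
lemma cconv_zero_left (g : (Fin d → ℤ) → ℝ) : cconv 0 g = 0 := by
  ext m; simp [cconv]

@[simp]
lemma cconv_zero_right (f : (Fin d → ℤ) → ℝ) : cconv f 0 = 0 := by
  ext m; simp [cconv]

lemma cconv_nonneg {f g : (Fin d → ℤ) → ℝ} (hf : ∀ x, 0 ≤ f x) (hg : ∀ x, 0 ≤ g x)
    (m : Fin d → ℤ) : 0 ≤ cconv f g m :=
  tsum_nonneg fun u => mul_nonneg (hf u) (hg _)

lemma cconv_fin_zero (f g : (Fin 0 → ℤ) → ℝ) : cconv f g 0 = f 0 * g 0 := by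
  rw [cconv, tsum_eq_single 0 fun x hx => absurd (Subsingleton.elim x 0) hx, sub_zero]

lemma support_cconv_subset (f g : (Fin d → ℤ) → ℝ) :
    support (cconv f g) ⊆ support f + support g := by
  intro m hm
  obtain ⟨u, hu⟩ : ∃ u, f u * g (m - u) ≠ 0 := by
    by_contra! h
    exact hm (by simp [cconv, h])
  exact ⟨u, left_ne_zero_of_mul hu, m - u, right_ne_zero_of_mul hu, add_sub_cancel u m⟩

lemma cconv_cons {f : (Fin (d + 1) → ℤ) → ℝ} (hf : (support f).Finite)
    (g : (Fin (d + 1) → ℤ) → ℝ) (k : ℤ) (m : Fin d → ℤ) :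
    cconv f g (Fin.cons k m) = ∑' j, cconv (slice f j) (slice g (k - j)) m := by
  rw [cconv, tsum_eq_tsum_tsum_cons (hf.subset (support_mul_subset_left _ _))]
  have cons_sub_cons : ∀ j x, (Fin.cons k m - Fin.cons j x : Fin (d + 1) → ℤ)
      = Fin.cons (k - j) (m - x) := fun j x => Matrix.cons_sub_cons k m j x
  simp only [cconv, slice, cons_sub_cons]

end Lattice

lemma SupportedInCube.finite_support {d : ℕ} {f : (Fin d → ℤ) → ℝ} (hf : SupportedInCube f) :
    (support f).Finite := by
  refine (Set.Finite.pi fun _ => Set.toFinite ({0, 1} : Set ℤ)).subset fun x hx i _ => ?_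
  by_contra hxi
  exact hx (hf x fun h => hxi (h i))

lemma SupportedInCube.finite_support_cconv {d : ℕ} {f g : (Fin d → ℤ) → ℝ}
    (hf : SupportedInCube f) (hg : SupportedInCube g) : (support (cconv f g)).Finite :=
  (hf.finite_support.add hg.finite_support).subset (support_cconv_subset f g)

lemma supportedInCube_slice {d : ℕ} {f : (Fin (d + 1) → ℤ) → ℝ} (hf : SupportedInCube f)
    (j : ℤ) : SupportedInCube (slice f j) :=
  fun x hx => hf _ fun h => hx fun i => by simpa using h i.succ

namespace SupportedInCube

variable {d : ℕ} {f g : (Fin (d + 1) → ℤ) → ℝ}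

lemma slice_eq_zero (hf : SupportedInCube f) {j : ℤ} (hj : j ∉ ({0, 1} : Finset ℤ)) :
    slice f j = 0 :=
  funext fun x => hf _ fun h => hj (by simpa using h 0)

lemma slice_cconv (hf : SupportedInCube f) (k : ℤ) :
    slice (cconv f g) k =
      cconv (slice f 0) (slice g k) + cconv (slice f 1) (slice g (k - 1)) := by
  funext m
  rw [slice, cconv_cons hf.finite_support,
    tsum_eq_sum (s := {0, 1}) fun j hj => by rw [hf.slice_eq_zero hj, cconv_zero_left]; rfl,
    Finset.sum_pair zero_ne_one, sub_zero]
  rfl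

lemma lnorm_eq_slice {s : ℝ} (hs : s ≠ 0) (hf : SupportedInCube f) :
    lnorm s f = (lnorm s (slice f 0) ^ s + lnorm s (slice f 1) ^ s) ^ (1 / s) := by
  rw [lnorm_eq_sum_slice hs hf.finite_support fun j hj => hf.slice_eq_zero hj,
    Finset.sum_pair zero_ne_one]

lemma lnorm_cconv_eq_slice {s : ℝ} (hs : s ≠ 0) (hf : SupportedInCube f) (hg : SupportedInCube g) :
    lnorm s (cconv f g) =
      (lnorm s (cconv (slice f 0) (slice g 0)) ^ s
        + lnorm s (cconv (slice f 0) (slice g 1) + cconv (slice f 1) (slice g 0)) ^ s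
        + lnorm s (cconv (slice f 1) (slice g 1)) ^ s) ^ (1 / s) := by
  rw [lnorm_eq_sum_slice hs (hf.finite_support_cconv hg) (t := {0, 1, 2}) fun k hk => ?_]
  · simp [Finset.sum_insert, hf.slice_cconv, hg.slice_eq_zero, add_assoc]
  · simp only [Finset.mem_insert, Finset.mem_singleton, not_or] at hk
    rw [hf.slice_cconv, hg.slice_eq_zero (by simp; omega), hg.slice_eq_zero (by simp; omega),
      cconv_zero_right, cconv_zero_right, add_zero]

end SupportedInCube

theorem lnorm_mul_lnorm_le_lnorm_cconv_of_twoPoint {r p q : ℝ} (hr0 : 0 < r) (hr1 : r ≤ 1)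
    (hp : p ≠ 0) (hq : q ≠ 0) (h2 : TwoPointReverseYoung r p q) :
    ∀ (d : ℕ) (f g : (Fin d → ℤ) → ℝ), (∀ x, 0 ≤ f x) → (∀ x, 0 ≤ g x) →
      SupportedInCube f → SupportedInCube g → lnorm p f * lnorm q g ≤ lnorm r (cconv f g)
  | 0, f, g, _, _, _, _ => by
    rw [lnorm_fin_zero hp, lnorm_fin_zero hq, lnorm_fin_zero hr0.ne', cconv_fin_zero, abs_mul]
  | d + 1, f, g, hf0, hg0, hf, hg => by
    have ih (i j : ℤ) := lnorm_mul_lnorm_le_lnorm_cconv_of_twoPoint hr0 hr1 hp hq h2 d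
      (slice f i) (slice g j) (fun _ => hf0 _) (fun _ => hg0 _) (supportedInCube_slice hf i)
      (supportedInCube_slice hg j)
    have middle := (add_le_add (ih 0 1) (ih 1 0)).trans (lnorm_add_lnorm_le_lnorm_add hr0 hr1
      (cconv_nonneg (fun _ => hf0 _) (fun _ => hg0 _))
      (cconv_nonneg (fun _ => hf0 _) (fun _ => hg0 _))
      ((supportedInCube_slice hf 0).finite_support_cconv (supportedInCube_slice hg 1))
      ((supportedInCube_slice hf 1).finite_support_cconv (supportedInCube_slice hg 0)))
    rw [hf.lnorm_eq_slice hp, hg.lnorm_eq_slice hq, hf.lnorm_cconv_eq_slice hr0.ne' hg]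
    refine (h2 _ _ _ _ (lnorm_nonneg _ _) (lnorm_nonneg _ _) (lnorm_nonneg _ _)
      (lnorm_nonneg _ _)).trans ?_
    have := lnorm_nonneg p (slice f 0)
    have := lnorm_nonneg p (slice f 1)
    have := lnorm_nonneg q (slice g 0)
    have := lnorm_nonneg q (slice g 1)
    gcongr
    exacts [ih 0 0, ih 1 1]

theorem reverse_young_hypercube_from_numerical_general (d : ℕ) (r p q : ℝ)
    (hr0 : 0 < r) (hr1 : r < 1) (hpr : r ≤ p) (hqr : r ≤ q)
    (hnum : ∀ x y : ℝ, 0 ≤ x → 0 ≤ y →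
      (1 + x ^ p) ^ (1 / p) * (1 + y ^ q) ^ (1 / q) ≤
        (1 + (x + y) ^ r + (x * y) ^ r) ^ (1 / r))
    (f g : (Fin d → ℤ) → ℝ) (hf0 : ∀ x, 0 ≤ f x) (hg0 : ∀ x, 0 ≤ g x)
    (hf : SupportedInCube f) (hg : SupportedInCube g) :
    lnorm p f * lnorm q g ≤ lnorm r (cconv f g) :=
  lnorm_mul_lnorm_le_lnorm_cconv_of_twoPoint hr0 hr1.le (hr0.trans_le hpr).ne'
    (hr0.trans_le hqr).ne' (twoPointReverseYoung_of_numerical hr0 hpr hqr hnum) d f g hf0 hg0 hf hg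

theorem reverse_young_hypercube_from_numerical (d : ℕ) (hd : 1 ≤ d) (r p q : ℝ)
    (hr0 : 0 < r) (hr1 : r < 1) (hpr : r ≤ p) (hqr : r ≤ q)
    (hnum : ∀ x y : ℝ, 0 ≤ x → 0 ≤ y →
      (1 + x ^ p) ^ (1 / p) * (1 + y ^ q) ^ (1 / q) ≤
        (1 + (x + y) ^ r + (x * y) ^ r) ^ (1 / r))
    (f g : (Fin d → ℤ) → ℝ) (hf0 : ∀ x, 0 ≤ f x) (hg0 : ∀ x, 0 ≤ g x)
    (hf : SupportedInCube f) (hg : SupportedInCube g) :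
    lnorm p f * lnorm q g ≤ lnorm r (cconv f g) :=
  reverse_young_hypercube_from_numerical_general d r p q hr0 hr1 hpr hqr hnum f g hf0 hg0 hf hg
end

section
/- Let r > 1 and set p_r := 2r / log₂(2 + 2^r). Then for all real x ≥ 0, one has (1 + (2x)^r + x^{2r})^{1/r} ≤ (1 + x^{p_r})^{2/p_r}. -/
/-!
Put `s = log₂ (2 + 2 ^ r)`, so that `2 ^ r = 2 ^ s - 2` and `s ≥ 2`, and `a = x ^ (r / s)`.
Raising both sides to the power `r`, the inequality becomes
`1 + (2 ^ s - 2) a ^ s + a ^ (2 s) ≤ (1 + a ^ 2) ^ s`. Dividing by `a ^ s` and writing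
`a = e ^ θ`, this says `2 ^ s - 2 ≤ (2 cosh θ) ^ s - 2 cosh (s θ)`, with equality at `θ = 0`.
The right-hand side is even in `θ` and increasing on `θ ≥ 0`: its derivative is nonnegative
there because `sinh (s θ) ≤ sinh θ (2 cosh θ) ^ (s - 1)`, which in the variable
`u = e ^ (-2 θ) ∈ (0, 1]` is `1 - u ^ s ≤ (1 - u) (1 + u) ^ (s - 1)` and follows from two
Bernoulli inequalities.
-/

open Real

theorem one_sub_rpow_add_one_le_mul_one_add_rpow {q u : ℝ} (hq : 1 ≤ q) (hu₀ : 0 ≤ u)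
    (hu₁ : u ≤ 1) : 1 - u ^ (q + 1) ≤ (1 - u) * (1 + u) ^ q := by
  have bernoulli_u : 1 + q * u ≤ (1 + u) ^ q :=
    one_add_mul_self_le_rpow_one_add (by linarith) hq
  have bernoulli_u_sub_one : 1 + q * (u - 1) ≤ u ^ q := by
    simpa using one_add_mul_self_le_rpow_one_add (s := u - 1) (by linarith) hq
  rw [rpow_add' hu₀ (by linarith), rpow_one]
  nlinarith [mul_le_mul_of_nonneg_left bernoulli_u (sub_nonneg.2 hu₁),
    mul_le_mul_of_nonneg_left bernoulli_u_sub_one hu₀]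

theorem exp_neg_mul_two_mul_sinh (θ : ℝ) : exp (-θ) * (2 * sinh θ) = 1 - exp (-2 * θ) := by
  rw [sinh_eq, mul_div_cancel₀ _ two_ne_zero, mul_sub, ← exp_add, ← exp_add, neg_add_cancel,
    exp_zero]
  ring_nf

theorem exp_neg_mul_two_mul_cosh (θ : ℝ) : exp (-θ) * (2 * cosh θ) = 1 + exp (-2 * θ) := by
  rw [cosh_eq, mul_div_cancel₀ _ two_ne_zero, mul_add, ← exp_add, ← exp_add, neg_add_cancel,
    exp_zero]
  ring_nf

theorem exp_mul_two_mul_cosh (θ : ℝ) : exp θ * (2 * cosh θ) = 1 + exp (2 * θ) := by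
  simpa using exp_neg_mul_two_mul_cosh (-θ)

theorem sinh_mul_le_sinh_mul_two_mul_cosh_rpow {s θ : ℝ} (hs : 2 ≤ s) (hθ : 0 ≤ θ) :
    sinh (s * θ) ≤ sinh θ * (2 * cosh θ) ^ (s - 1) := by
  refine le_of_mul_le_mul_left ?_ (exp_pos (-(s * θ)))
  calc exp (-(s * θ)) * sinh (s * θ)
      = (1 - exp (-2 * θ) ^ (s - 1 + 1)) / 2 := by
        rw [sub_add_cancel, ← exp_mul, show -2 * θ * s = -2 * (s * θ) by ring,
          ← exp_neg_mul_two_mul_sinh]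
        ring
    _ ≤ (1 - exp (-2 * θ)) * (1 + exp (-2 * θ)) ^ (s - 1) / 2 := by
        gcongr
        exact one_sub_rpow_add_one_le_mul_one_add_rpow (by linarith) (exp_nonneg _)
          (exp_le_one_iff.2 (by linarith))
    _ = exp (-(s * θ)) * (sinh θ * (2 * cosh θ) ^ (s - 1)) := by
        rw [← exp_neg_mul_two_mul_sinh, ← exp_neg_mul_two_mul_cosh,
          mul_rpow (exp_nonneg _) (by positivity), ← exp_mul,
          show -(s * θ) = -θ + -θ * (s - 1) by ring, exp_add]
        ring

noncomputable def coshGap (s θ : ℝ) : ℝ := (2 * cosh θ) ^ s - 2 * cosh (s * θ)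

theorem hasDerivAt_coshGap (s θ : ℝ) :
    HasDerivAt (coshGap s) (2 * s * (sinh θ * (2 * cosh θ) ^ (s - 1) - sinh (s * θ))) θ := by
  have hbase := ((hasDerivAt_cosh θ).const_mul 2).rpow_const (p := s) (Or.inl (by positivity))
  have hmul := ((hasDerivAt_id θ).const_mul s).cosh.const_mul 2
  exact (hbase.sub hmul).congr_deriv (by simp only [id, mul_one]; ring)

theorem coshGap_neg (s θ : ℝ) : coshGap s (-θ) = coshGap s θ := by
  simp only [coshGap, cosh_neg, mul_neg]

theorem coshGap_zero (s : ℝ) : coshGap s 0 = 2 ^ s - 2 := by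
  simp [coshGap]

theorem monotoneOn_coshGap {s : ℝ} (hs : 2 ≤ s) : MonotoneOn (coshGap s) (Set.Ici 0) := by
  have hderiv := hasDerivAt_coshGap s
  refine monotoneOn_of_hasDerivWithinAt_nonneg (convex_Ici 0)
    (fun θ _ => (hderiv θ).continuousAt.continuousWithinAt)
    (fun θ _ => (hderiv θ).hasDerivWithinAt) fun θ hθ => ?_
  rw [interior_Ici] at hθ
  exact mul_nonneg (by linarith)
    (sub_nonneg.2 (sinh_mul_le_sinh_mul_two_mul_cosh_rpow hs hθ.le))

theorem two_rpow_sub_two_le_coshGap {s : ℝ} (hs : 2 ≤ s) (θ : ℝ) :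
    2 ^ s - 2 ≤ coshGap s θ := by
  rw [← coshGap_zero s]
  rcases le_total 0 θ with hθ | hθ
  · exact monotoneOn_coshGap hs Set.self_mem_Ici hθ hθ
  · simpa only [coshGap_neg] using
      monotoneOn_coshGap hs Set.self_mem_Ici (Set.mem_Ici.2 (neg_nonneg.2 hθ)) (neg_nonneg.2 hθ)

theorem one_add_rpow_add_rpow_le_one_add_sq_rpow {s a : ℝ} (hs : 2 ≤ s) (ha : 0 ≤ a) :
    1 + (2 ^ s - 2) * a ^ s + a ^ (2 * s) ≤ (1 + a ^ 2) ^ s := by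
  rcases ha.eq_or_lt with rfl | ha
  · simp [zero_rpow (by linarith : s ≠ 0), zero_rpow (by linarith : 2 * s ≠ 0)]
  obtain ⟨θ, rfl⟩ : ∃ θ, exp θ = a := ⟨log a, exp_log ha⟩
  rw [← exp_mul, ← exp_mul, show θ * (2 * s) = 2 * (s * θ) by ring, mul_comm θ s]
  calc 1 + (2 ^ s - 2) * exp (s * θ) + exp (2 * (s * θ))
      = exp (s * θ) * (2 ^ s - 2) + exp (s * θ) * (2 * cosh (s * θ)) := by
        rw [exp_mul_two_mul_cosh]; ring
    _ ≤ exp (s * θ) * coshGap s θ + exp (s * θ) * (2 * cosh (s * θ)) := by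
        gcongr; exact two_rpow_sub_two_le_coshGap hs θ
    _ = (exp θ * (2 * cosh θ)) ^ s := by
        rw [coshGap, mul_rpow (exp_nonneg _) (by positivity), ← exp_mul, mul_comm θ s]; ring
    _ = (1 + exp θ ^ 2) ^ s := by
        rw [exp_mul_two_mul_cosh, ← exp_nat_mul]; ring_nf

theorem numerical_diagonal_inequality (r : ℝ) (hr : 1 < r) (x : ℝ) (hx : 0 ≤ x) :
    (1 + (2 * x) ^ r + x ^ (2 * r)) ^ (1 / r) ≤
      (1 + x ^ (2 * r / Real.logb 2 (2 + 2 ^ r))) ^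
        (2 / (2 * r / Real.logb 2 (2 + 2 ^ r))) := by
  have hr₀ : 0 < r := by linarith
  set s := logb 2 (2 + 2 ^ r)
  have hpow_s : (2 : ℝ) ^ s = 2 + 2 ^ r := rpow_logb two_pos (by norm_num) (by positivity)
  have hs : 2 ≤ s := by
    rw [le_logb_iff_rpow_le one_lt_two (by positivity)]
    have : (2 : ℝ) ≤ 2 ^ r := by simpa using rpow_le_rpow_of_exponent_le one_le_two hr.le
    norm_num; linarith
  have hs₀ : 0 < s := by linarith
  set a := x ^ (r / s)
  have hxr : x ^ r = a ^ s := by rw [← rpow_mul hx, div_mul_cancel₀ _ hs₀.ne']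
  have hx2r : x ^ (2 * r) = a ^ (2 * s) := by rw [← rpow_mul hx]; congr 1; field_simp
  have hxp : x ^ (2 * r / s) = a ^ 2 := by
    rw [← rpow_natCast, ← rpow_mul hx]; congr 1; push_cast; ring
  have hexponent : 2 / (2 * r / s) = s * (1 / r) := by field_simp
  rw [mul_rpow zero_le_two hx, hxr, hx2r, hxp, hexponent,
    rpow_mul (x := 1 + a ^ 2) (by positivity)]
  refine rpow_le_rpow (by positivity) ?_ (by positivity)
  simpa only [hpow_s, add_sub_cancel_left] using
    one_add_rpow_add_rpow_le_one_add_sq_rpow hs (rpow_nonneg hx (r / s))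
end

section
/- Let 0 < r < 1 and set p_r := 2r / log₂(2 + 2^r). Then for all real x ≥ 0, one has (1 + (2x)^r + x^{2r})^{1/r} ≥ (1 + x^{p_r})^{2/p_r}. -/
/-!
With `t = x ^ r` and `q = 2 / log₂ (2 + 2 ^ r) ∈ [1, 2]`, so that `2 ^ (2 / q) - 2 = 2 ^ r`, the
`r`-th power of the inequality reads `(1 + t ^ q) ^ (2 / q) ≤ 1 + (2 ^ (2 / q) - 2) t + t ^ 2`,
i.e. `gap q t ≥ 0`. Since `gap q t = t ^ 2 * gap q t⁻¹`, it suffices to take `t ≤ 1`.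
On `[0, 1]`, `gap` vanishes at both ends and `gap' 1 = 0`, while
`gap'' t = 2 t ^ (q - 2) (1 + t ^ q) ^ (2 / q - 2) * curvatureFactor q t` with `curvatureFactor q`
increasing (two Bernoulli inequalities). So `gap''` changes sign at most once, from `-` to `+`;
then `gap'` is quasiconvex and `≤ 0` from its first zero on, so `gap` first increases and then
decreases to `gap 1 = 0`.
-/

open Real Set

section SignChange

variable {f f' f'' : ℝ → ℝ} {a b : ℝ}

lemma monotoneOn_Icc_of_hasDerivAt_nonneg (hf : ContinuousOn f (Icc a b))
    (hf' : ∀ x ∈ Ioo a b, HasDerivAt f (f' x) x) (hf'₀ : ∀ x ∈ Ioo a b, 0 ≤ f' x) :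
    MonotoneOn f (Icc a b) :=
  monotoneOn_of_hasDerivWithinAt_nonneg (convex_Icc a b) hf
    (fun x hx ↦ (hf' x (by rwa [interior_Icc] at hx)).hasDerivWithinAt)
    (fun x hx ↦ hf'₀ x (by rwa [interior_Icc] at hx))

lemma antitoneOn_Icc_of_hasDerivAt_nonpos (hf : ContinuousOn f (Icc a b))
    (hf' : ∀ x ∈ Ioo a b, HasDerivAt f (f' x) x) (hf'₀ : ∀ x ∈ Ioo a b, f' x ≤ 0) :
    AntitoneOn f (Icc a b) :=
  antitoneOn_of_hasDerivWithinAt_nonpos (convex_Icc a b) hf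
    (fun x hx ↦ (hf' x (by rwa [interior_Icc] at hx)).hasDerivWithinAt)
    (fun x hx ↦ hf'₀ x (by rwa [interior_Icc] at hx))

/-- If `f'` changes sign at most once, from negative to nonnegative, then `f` is quasiconvex. -/
lemma le_max_of_hasDerivAt_of_sign_change (hf : ContinuousOn f (Icc a b))
    (hf' : ∀ x ∈ Ioo a b, HasDerivAt f (f' x) x)
    (hsign : ∀ x ∈ Ioo a b, ∀ y ∈ Ioo a b, x ≤ y → 0 ≤ f' x → 0 ≤ f' y)
    {x : ℝ} (hx : x ∈ Icc a b) : f x ≤ max (f a) (f b) := by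
  by_cases h : ∃ w ∈ Ioo a x, 0 ≤ f' w
  · obtain ⟨w, hw, hw₀⟩ := h
    have hw' : w ∈ Ioo a b := ⟨hw.1, hw.2.trans_le hx.2⟩
    have hmono : MonotoneOn f (Icc x b) :=
      monotoneOn_Icc_of_hasDerivAt_nonneg (hf.mono (Icc_subset_Icc_left hx.1))
        (fun y hy ↦ hf' y ⟨hx.1.trans_lt hy.1, hy.2⟩)
        (fun y hy ↦ hsign w hw' y ⟨hx.1.trans_lt hy.1, hy.2⟩ (hw.2.trans hy.1).le hw₀)
    exact le_max_of_le_right (hmono (left_mem_Icc.2 hx.2) (right_mem_Icc.2 hx.2) hx.2)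
  · push Not at h
    have hanti : AntitoneOn f (Icc a x) :=
      antitoneOn_Icc_of_hasDerivAt_nonpos (hf.mono (Icc_subset_Icc_right hx.2))
        (fun y hy ↦ hf' y ⟨hy.1, hy.2.trans_le hx.2⟩) (fun y hy ↦ (h y hy).le)
    exact le_max_of_le_left (hanti (left_mem_Icc.2 hx.1) (right_mem_Icc.2 hx.1) hx.1)

lemma nonneg_of_hasDerivAt_of_sign_change (hf : ContinuousOn f (Icc a b))
    (hf' : ∀ x ∈ Ioo a b, HasDerivAt f (f' x) x) (hf'' : ∀ x ∈ Ioc a b, HasDerivAt f' (f'' x) x)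
    (hsign : ∀ x ∈ Ioo a b, ∀ y ∈ Ioo a b, x ≤ y → 0 ≤ f'' x → 0 ≤ f'' y)
    (ha : f a = 0) (hb : f b = 0) (hb' : f' b = 0) {x : ℝ} (hx : x ∈ Icc a b) : 0 ≤ f x := by
  rcases hx.1.eq_or_lt with rfl | hax
  · exact ha.ge
  have hquasi : ∀ u ∈ Ioc a b, ∀ y ∈ Icc u b, f' y ≤ max (f' u) 0 := fun u hu y hy ↦ by
    rw [← hb']
    refine le_max_of_hasDerivAt_of_sign_change
      (fun z hz ↦ (hf'' z ⟨hu.1.trans_le hz.1, hz.2⟩).continuousAt.continuousWithinAt)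
      (fun z hz ↦ hf'' z ⟨hu.1.trans hz.1, hz.2.le⟩)
      (fun z hz w hw ↦ hsign z ⟨hu.1.trans hz.1, hz.2⟩ w ⟨hu.1.trans hw.1, hw.2⟩) hy
  by_cases hx' : f' x ≤ 0
  · have hanti : AntitoneOn f (Icc x b) :=
      antitoneOn_Icc_of_hasDerivAt_nonpos (hf.mono (Icc_subset_Icc_left hx.1))
        (fun y hy ↦ hf' y ⟨hax.trans hy.1, hy.2⟩)
        (fun y hy ↦ (hquasi x ⟨hax, hx.2⟩ y (Ioo_subset_Icc_self hy)).trans (max_le hx' le_rfl))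
    simpa [hb] using hanti (left_mem_Icc.2 hx.2) (right_mem_Icc.2 hx.2) hx.2
  · have hmono : MonotoneOn f (Icc a x) :=
      monotoneOn_Icc_of_hasDerivAt_nonneg (hf.mono (Icc_subset_Icc_right hx.2))
        (fun y hy ↦ hf' y ⟨hy.1, hy.2.trans_le hx.2⟩)
        (fun y hy ↦ by
          by_contra! hy'
          have := hquasi y ⟨hy.1, hy.2.le.trans hx.2⟩ x ⟨hy.2.le, hx.2⟩
          exact hx' (this.trans (max_le hy'.le le_rfl)))
    simpa [ha] using hmono (left_mem_Icc.2 hx.1) (right_mem_Icc.2 hx.1) hx.1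

end SignChange

lemma rpow_mul_one_add_rpow_le {p u : ℝ} (hp1 : 1 ≤ p) (hp2 : p ≤ 2) (hu0 : 0 ≤ u) (hu1 : u ≤ 1) :
    u ^ (2 - p) * (1 + u) ^ (p - 1) ≤ p - 1 + u := by
  have h₁ : u ^ (2 - p) ≤ 1 + (2 - p) * (u - 1) := by
    simpa using rpow_one_add_le_one_add_mul_self (s := u - 1) (by linarith) (by linarith)
      (by linarith)
  have h₂ : (1 + u) ^ (p - 1) ≤ 1 + (p - 1) * u :=
    rpow_one_add_le_one_add_mul_self (by linarith) (by linarith) (by linarith)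
  calc _ ≤ (1 + (2 - p) * (u - 1)) * (1 + (p - 1) * u) :=
        mul_le_mul h₁ h₂ (by positivity) (by nlinarith)
    _ ≤ p - 1 + u := by
      -- the difference is `(p - 1) (2 - p) u (1 - u)`
      linear_combination mul_nonneg (mul_nonneg (sub_nonneg.2 hp1) (sub_nonneg.2 hp2))
        (mul_nonneg hu0 (sub_nonneg.2 hu1))

namespace DiagonalInequality

noncomputable def gap (q t : ℝ) : ℝ :=
  1 + (2 ^ (2 / q) - 2) * t + t ^ 2 - (1 + t ^ q) ^ (2 / q)

noncomputable def gapDeriv (q t : ℝ) : ℝ :=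
  2 ^ (2 / q) - 2 + 2 * t - 2 * (t ^ (q - 1) * (1 + t ^ q) ^ (2 / q - 1))

noncomputable def curvatureFactor (q t : ℝ) : ℝ :=
  t ^ (2 - q) * (1 + t ^ q) ^ (2 - 2 / q) - t ^ q - (q - 1)

variable {q t : ℝ}

lemma rpow_rpow_two_div (hq : q ≠ 0) (ht : 0 ≤ t) : (t ^ q) ^ (2 / q) = t ^ 2 := by
  rw [← rpow_mul ht, mul_div_cancel₀ _ hq, rpow_two]

lemma hasDerivAt_gap (hq : 1 ≤ q) (ht : 0 ≤ t) : HasDerivAt (gap q) (gapDeriv q t) t := by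
  have hpow : HasDerivAt (fun s ↦ s ^ q) (q * t ^ (q - 1)) t :=
    hasDerivAt_rpow_const (Or.inr hq)
  have := ((((hasDerivAt_id t).const_mul (2 ^ (2 / q) - 2)).const_add 1).add
    (hasDerivAt_pow 2 t)).sub ((hpow.const_add 1).rpow_const (p := 2 / q) (Or.inl (by positivity)))
  refine this.congr_deriv ?_
  simp only [gapDeriv]
  field_simp
  ring

lemma hasDerivAt_gapDeriv (hq : q ≠ 0) (ht : 0 < t) :
    HasDerivAt (gapDeriv q)
      (2 * t ^ (q - 2) * (1 + t ^ q) ^ (2 / q - 2) * curvatureFactor q t) t := by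
  have hb : 0 < 1 + t ^ q := by positivity
  have := (((hasDerivAt_id t).const_mul 2).const_add (2 ^ (2 / q) - 2)).sub
    (((hasDerivAt_rpow_const (p := q - 1) (Or.inl ht.ne')).mul
      (((hasDerivAt_rpow_const (p := q) (Or.inl ht.ne')).const_add 1).rpow_const
        (p := 2 / q - 1) (Or.inl hb.ne'))).const_mul 2)
  refine this.congr_deriv ?_
  simp only [curvatureFactor, rpow_sub ht, rpow_sub hb, rpow_one, rpow_two]
  field_simp
  ring

lemma hasDerivAt_curvatureFactor (hq : q ≠ 0) (ht : 0 < t) :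
    HasDerivAt (curvatureFactor q)
      (t ^ (1 - q) * (1 + t ^ q) ^ (1 - 2 / q) * (2 - q + q * t ^ q) - q * t ^ (q - 1)) t := by
  have hb : 0 < 1 + t ^ q := by positivity
  have hpow : HasDerivAt (fun s ↦ s ^ q) (q * t ^ (q - 1)) t :=
    hasDerivAt_rpow_const (Or.inl ht.ne')
  have := (((hasDerivAt_rpow_const (p := 2 - q) (Or.inl ht.ne')).mul
    ((hpow.const_add 1).rpow_const (p := 2 - 2 / q) (Or.inl hb.ne'))).sub hpow).sub_const (q - 1)
  refine this.congr_deriv ?_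
  simp only [rpow_sub ht, rpow_sub hb, rpow_one, rpow_two]
  field_simp
  ring

lemma curvatureFactor_deriv_nonneg (hq1 : 1 ≤ q) (hq2 : q ≤ 2) (ht0 : 0 < t) (ht1 : t ≤ 1) :
    0 ≤ t ^ (1 - q) * (1 + t ^ q) ^ (1 - 2 / q) * (2 - q + q * t ^ q) - q * t ^ (q - 1) := by
  have hq0 : 0 < q := by linarith
  have hu0 : 0 < t ^ q := rpow_pos_of_pos ht0 q
  have hb : 0 < 1 + t ^ q := by positivity
  have hK := rpow_mul_one_add_rpow_le (p := 2 / q) (u := t ^ q)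
    (by rw [le_div_iff₀ hq0]; linarith) (by rw [div_le_iff₀ hq0]; linarith) hu0.le
    (rpow_le_one ht0.le ht1 hq0.le)
  -- with `u = t ^ q`, clearing the denominators turns `hK` into the goal
  simp only [rpow_sub ht0, rpow_sub hu0, rpow_sub hb, rpow_one, rpow_two,
    rpow_rpow_two_div hq0.ne' ht0.le] at hK ⊢
  field_simp at hK ⊢
  linarith

lemma monotoneOn_curvatureFactor (hq1 : 1 ≤ q) (hq2 : q ≤ 2) :
    MonotoneOn (curvatureFactor q) (Ioc 0 1) := by
  have hq0 : q ≠ 0 := by positivity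
  refine monotoneOn_of_hasDerivWithinAt_nonneg (convex_Ioc 0 1)
    (f' := fun t ↦ t ^ (1 - q) * (1 + t ^ q) ^ (1 - 2 / q) * (2 - q + q * t ^ q) - q * t ^ (q - 1))
    (fun t ht ↦ (hasDerivAt_curvatureFactor hq0 ht.1).continuousAt.continuousWithinAt)
    (fun t ht ↦ ?_) (fun t ht ↦ ?_) <;> rw [interior_Ioc] at ht
  · exact (hasDerivAt_curvatureFactor hq0 ht.1).hasDerivWithinAt
  · exact curvatureFactor_deriv_nonneg hq1 hq2 ht.1 ht.2.le

lemma gap_zero (hq : q ≠ 0) : gap q 0 = 0 := by simp [gap, zero_rpow hq]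

lemma gap_one : gap q 1 = 0 := by norm_num [gap]; ring

lemma gapDeriv_one : gapDeriv q 1 = 0 := by norm_num [gapDeriv, rpow_sub two_pos]; ring

lemma gap_nonneg_of_le_one (hq1 : 1 ≤ q) (hq2 : q ≤ 2) (ht0 : 0 ≤ t) (ht1 : t ≤ 1) :
    0 ≤ gap q t := by
  have hq0 : q ≠ 0 := by positivity
  have hweight : ∀ s : ℝ, 0 < s → 0 < 2 * s ^ (q - 2) * (1 + s ^ q) ^ (2 / q - 2) :=
    fun s hs ↦ by positivity
  refine nonneg_of_hasDerivAt_of_sign_change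
    (fun x hx ↦ (hasDerivAt_gap hq1 hx.1).continuousAt.continuousWithinAt)
    (fun x hx ↦ hasDerivAt_gap hq1 hx.1.le) (fun x hx ↦ hasDerivAt_gapDeriv hq0 hx.1)
    (fun x hx y hy hxy hx₀ ↦ ?_) (gap_zero hq0) gap_one gapDeriv_one ⟨ht0, ht1⟩
  refine mul_nonneg (hweight y hy.1).le ?_
  exact (nonneg_of_mul_nonneg_right hx₀ (hweight x hx.1)).trans
    (monotoneOn_curvatureFactor hq1 hq2 ⟨hx.1, hx.2.le⟩ ⟨hy.1, hy.2.le⟩ hxy)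

lemma gap_eq_sq_mul_gap_inv (hq : q ≠ 0) (ht : 0 < t) : gap q t = t ^ 2 * gap q t⁻¹ := by
  have hu : 0 < t ^ q := rpow_pos_of_pos ht q
  have h : (1 + t ^ q) ^ (2 / q) = t ^ 2 * (1 + t⁻¹ ^ q) ^ (2 / q) := by
    rw [inv_rpow ht.le, ← rpow_rpow_two_div hq ht.le, ← mul_rpow hu.le (by positivity), mul_add,
      mul_inv_cancel₀ hu.ne', mul_one, add_comm]
  rw [gap, gap, h]
  field_simp
  ring

lemma gap_nonneg (hq1 : 1 ≤ q) (hq2 : q ≤ 2) (ht : 0 ≤ t) : 0 ≤ gap q t := by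
  rcases le_or_gt t 1 with ht1 | ht1
  · exact gap_nonneg_of_le_one hq1 hq2 ht ht1
  · rw [gap_eq_sq_mul_gap_inv (by positivity) (by linarith)]
    exact mul_nonneg (sq_nonneg t)
      (gap_nonneg_of_le_one hq1 hq2 (by positivity) (inv_le_one_of_one_le₀ ht1.le))

end DiagonalInequality

theorem one_add_rpow_rpow_two_div_le {q t : ℝ} (hq1 : 1 ≤ q) (hq2 : q ≤ 2) (ht : 0 ≤ t) :
    (1 + t ^ q) ^ (2 / q) ≤ 1 + (2 ^ (2 / q) - 2) * t + t ^ 2 :=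
  sub_nonneg.1 (DiagonalInequality.gap_nonneg hq1 hq2 ht)

theorem numerical_diagonal_inequality_reverse (r : ℝ) (hr0 : 0 < r) (hr1 : r < 1)
    (x : ℝ) (hx : 0 ≤ x) :
    (1 + x ^ (2 * r / Real.logb 2 (2 + 2 ^ r))) ^
        (2 / (2 * r / Real.logb 2 (2 + 2 ^ r))) ≤
      (1 + (2 * x) ^ r + x ^ (2 * r)) ^ (1 / r) := by
  set L := logb 2 (2 + 2 ^ r)
  have hpow : (2 : ℝ) ^ L = 2 + 2 ^ r := rpow_logb two_pos (by norm_num) (by positivity)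
  have hL1 : 1 ≤ L := by
    rw [le_logb_iff_rpow_le one_lt_two (by positivity), rpow_one]
    linarith [rpow_pos_of_pos two_pos r]
  have hL2 : L ≤ 2 := by
    rw [logb_le_iff_le_rpow one_lt_two (by positivity), rpow_two]
    linarith [rpow_lt_rpow_of_exponent_lt one_lt_two hr1, rpow_one (2 : ℝ)]
  have hL0 : 0 < L := by linarith
  have key := one_add_rpow_rpow_two_div_le (q := 2 / L)
    (by rw [le_div_iff₀ hL0]; linarith) (by rw [div_le_iff₀ hL0]; linarith) (rpow_nonneg hx r)
  rw [div_div_cancel₀ two_ne_zero, hpow, ← rpow_mul hx, mul_div_assoc', mul_comm r 2,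
    ← rpow_natCast, ← rpow_mul hx] at key
  calc (1 + x ^ (2 * r / L)) ^ (2 / (2 * r / L)) = ((1 + x ^ (2 * r / L)) ^ L) ^ (1 / r) := by
        rw [← rpow_mul (by positivity), mul_one_div, div_div_eq_mul_div,
          mul_div_mul_left _ _ two_ne_zero]
    _ ≤ (1 + (2 + 2 ^ r - 2) * x ^ r + x ^ (r * (2 : ℕ))) ^ (1 / r) := by gcongr
    _ = (1 + (2 * x) ^ r + x ^ (2 * r)) ^ (1 / r) := by
        rw [mul_rpow zero_le_two hx]
        ring_nf
end
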